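/- arXiv:2504.13108 — 7 statements merged into one kernel-verified Lean document; each statement's English description precedes it below -/
import Mathlib

section
/- The map ι sending a signed permutation w of size n to the permutation of S_{2n} order-isomorphic to the word w(-n) w(-n+1) ... w(-1) w(1) ... w(n) is a bijection from the group of signed permutations of size n onto the set of permutations of S_{2n} that are invariant under reverse-complement. -/
/-- The set of valid positions/values for a signed permutation of size `n`:
`{±1, …, ±n}`. -/
def windowSet (n : ℕ) : Set ℤ := {x : ℤ | 1 ≤ |x| ∧ |x| ≤ (n : ℤ)}

/-- `w : ℤ → ℤ` represents a signed permutation of size `n`: it is odd,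
bijective on `{±1,…,±n}`, and (as a normalization) the identity elsewhere. -/
def IsSignedPerm (n : ℕ) (w : ℤ → ℤ) : Prop :=
  (∀ x : ℤ, w (-x) = - w x) ∧ Set.BijOn w (windowSet n) (windowSet n) ∧
  ∀ x : ℤ, x ∉ windowSet n → w x = x

/-- `u ∈ S_m` is invariant under reverse-complement. -/
def RCInvariant {m : ℕ} (u : Equiv.Perm (Fin m)) : Prop :=
  ∀ i, u i.rev = (u i).rev

/-- The index in `{±1,…,±n}` corresponding to position `a` in the
mirror notation `w(-n) ⋯ w(-1) w(1) ⋯ w(n)`. -/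
def mirrorIdx (n : ℕ) (a : Fin (2 * n)) : ℤ :=
  if (a : ℕ) < n then (a : ℤ) - n else (a : ℤ) - n + 1

/-- `u ∈ S_{2n}` is order-isomorphic to the mirror notation of `w`,
i.e. `u = ι(w)`. -/
def IotaSpec (n : ℕ) (w : ℤ → ℤ) (u : Equiv.Perm (Fin (2 * n))) : Prop :=
  ∀ a b, u a < u b ↔ w (mirrorIdx n a) < w (mirrorIdx n b)

/-!
The positions `0, …, 2n-1` of the mirror notation are listed in increasing order of their
indices `-n, …, -1, 1, …, n`, so `mirrorIdx n` is an order isomorphism `Fin (2n) ≃o {±1,…,±n}`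
which turns `Fin.rev` into negation. Hence `ι(w)` is simply the conjugate of `w` by this
isomorphism, and under conjugation the oddness of `w` becomes rc-invariance of `ι(w)`.
-/

open Equiv

lemma neg_mem_windowSet {n : ℕ} {x : ℤ} : -x ∈ windowSet n ↔ x ∈ windowSet n := by
  simp only [windowSet, Set.mem_ofPred_eq, abs_neg]

lemma mirrorIdx_mem_windowSet (n : ℕ) (a : Fin (2 * n)) : mirrorIdx n a ∈ windowSet n := by
  have := a.isLt
  simp only [mirrorIdx, windowSet, Set.mem_ofPred_eq, le_abs, abs_le]
  split <;> omega

lemma strictMono_mirrorIdx (n : ℕ) : StrictMono (mirrorIdx n) := by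
  intro a b hab
  have := b.isLt
  rw [Fin.lt_def] at hab
  simp only [mirrorIdx]
  split <;> split <;> omega

lemma exists_mirrorIdx_eq {n : ℕ} {x : ℤ} (hx : x ∈ windowSet n) :
    ∃ a : Fin (2 * n), mirrorIdx n a = x := by
  obtain ⟨h1, h2⟩ := hx
  rcases le_or_gt x 0 with hx0 | hx0
  · rw [abs_of_nonpos hx0] at h1 h2
    refine ⟨⟨(x + n).toNat, by omega⟩, ?_⟩
    simp only [mirrorIdx]
    rw [if_pos (by omega)]
    omega
  · rw [abs_of_pos hx0] at h1 h2
    refine ⟨⟨(x + n - 1).toNat, by omega⟩, ?_⟩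
    simp only [mirrorIdx]
    rw [if_neg (by omega)]
    omega

lemma mirrorIdx_rev (n : ℕ) (a : Fin (2 * n)) : mirrorIdx n a.rev = -mirrorIdx n a := by
  have := a.isLt
  simp only [mirrorIdx, Fin.val_rev]
  split <;> split <;> omega

noncomputable def mirrorOrderIso (n : ℕ) : Fin (2 * n) ≃o windowSet n :=
  StrictMono.orderIsoOfSurjective (fun a => ⟨mirrorIdx n a, mirrorIdx_mem_windowSet n a⟩)
    (strictMono_mirrorIdx n) fun ⟨_, hx⟩ =>
      (exists_mirrorIdx_eq hx).imp fun _ ha => Subtype.ext ha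

@[simp]
lemma coe_mirrorOrderIso (n : ℕ) (a : Fin (2 * n)) :
    (mirrorOrderIso n a : ℤ) = mirrorIdx n a :=
  rfl

lemma IsSignedPerm.ext {n : ℕ} {w w' : ℤ → ℤ} (hw : IsSignedPerm n w) (hw' : IsSignedPerm n w')
    (h : ∀ a, w (mirrorIdx n a) = w' (mirrorIdx n a)) : w = w' := by
  funext x
  by_cases hx : x ∈ windowSet n
  · obtain ⟨a, rfl⟩ := exists_mirrorIdx_eq hx
    exact h a
  · rw [hw.2.2 x hx, hw'.2.2 x hx]

lemma Equiv.Perm.bijOn_ofSubtype {α : Type*} {s : Set α} [DecidablePred (· ∈ s)]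
    (f : Perm s) : Set.BijOn (Perm.ofSubtype f) s s := by
  have hmem := Perm.ofSubtype_apply_mem_iff_mem f
  refine ⟨fun x hx => (hmem x).2 hx, (Perm.ofSubtype f).injective.injOn, fun y hy => ?_⟩
  exact ⟨(Perm.ofSubtype f).symm y, (hmem _).1 (by simpa using hy), by simp⟩

noncomputable def iota (n : ℕ) (w : {w : ℤ → ℤ // IsSignedPerm n w}) :
    Perm (Fin (2 * n)) :=
  (mirrorOrderIso n).symm.toEquiv.permCongr (w.2.2.1.equiv w.1)

lemma mirrorIdx_iota (n : ℕ) (w : {w : ℤ → ℤ // IsSignedPerm n w}) (a : Fin (2 * n)) :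
    mirrorIdx n (iota n w a) = w.1 (mirrorIdx n a) := by
  rw [← coe_mirrorOrderIso, iota, Equiv.permCongr_apply]
  simp [Set.BijOn.equiv]

lemma iotaSpec_iota (n : ℕ) (w : {w : ℤ → ℤ // IsSignedPerm n w}) : IotaSpec n w.1 (iota n w) :=
  fun a b => by rw [← (strictMono_mirrorIdx n).lt_iff_lt, mirrorIdx_iota, mirrorIdx_iota]

lemma iota_injective (n : ℕ) : Function.Injective (iota n) := fun w w' h =>
  Subtype.ext <| w.2.ext w'.2 fun a => by rw [← mirrorIdx_iota, ← mirrorIdx_iota, h]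

lemma rcInvariant_iota (n : ℕ) (w : {w : ℤ → ℤ // IsSignedPerm n w}) :
    RCInvariant (iota n w) := fun i =>
  (strictMono_mirrorIdx n).injective <| by
    rw [mirrorIdx_iota, mirrorIdx_rev, w.2.1, ← mirrorIdx_iota, mirrorIdx_rev]

noncomputable def signedPermOfPerm (n : ℕ) (u : Perm (Fin (2 * n))) : ℤ → ℤ :=
  open Classical in Perm.ofSubtype ((mirrorOrderIso n).toEquiv.permCongr u)

lemma signedPermOfPerm_mirrorIdx (n : ℕ) (u : Perm (Fin (2 * n))) (a : Fin (2 * n)) :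
    signedPermOfPerm n u (mirrorIdx n a) = mirrorIdx n (u a) := by
  classical
  rw [signedPermOfPerm, ← coe_mirrorOrderIso, Perm.ofSubtype_apply_coe, Equiv.permCongr_apply]
  simp

lemma isSignedPerm_signedPermOfPerm {n : ℕ} {u : Perm (Fin (2 * n))} (hu : RCInvariant u) :
    IsSignedPerm n (signedPermOfPerm n u) := by
  classical
  have hout : ∀ x, x ∉ windowSet n → signedPermOfPerm n u x = x :=
    fun x hx => Perm.ofSubtype_apply_of_not_mem _ hx
  refine ⟨fun x => ?_, Perm.bijOn_ofSubtype _, hout⟩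
  by_cases hx : x ∈ windowSet n
  · obtain ⟨a, rfl⟩ := exists_mirrorIdx_eq hx
    rw [← mirrorIdx_rev, signedPermOfPerm_mirrorIdx, signedPermOfPerm_mirrorIdx, hu,
      mirrorIdx_rev]
  · rw [hout x hx, hout (-x) (neg_mem_windowSet.not.2 hx)]

lemma iota_signedPermOfPerm {n : ℕ} {u : Perm (Fin (2 * n))} (hu : RCInvariant u) :
    iota n ⟨_, isSignedPerm_signedPermOfPerm hu⟩ = u :=
  Equiv.ext fun a => (strictMono_mirrorIdx n).injective <| by
    rw [mirrorIdx_iota]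
    exact signedPermOfPerm_mirrorIdx n u a

/-- The map `ι`, sending a signed permutation `w` of size `n` to the
permutation of `S_{2n}` order-isomorphic to the mirror notation of `w`,
is a bijection from signed permutations of size `n` onto the
rc-invariant elements of `S_{2n}`. -/
theorem stmt0 (n : ℕ) :
    ∃ ι : {w : ℤ → ℤ // IsSignedPerm n w} → Equiv.Perm (Fin (2 * n)),
      (∀ w, IotaSpec n w.1 (ι w)) ∧
      Function.Injective ι ∧
      (∀ w, RCInvariant (ι w)) ∧
      (∀ u : Equiv.Perm (Fin (2 * n)), RCInvariant u → ∃ w, ι w = u) :=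
  ⟨iota n, iotaSpec_iota n, iota_injective n, rcInvariant_iota n,
    fun _ hu => ⟨_, iota_signedPermOfPerm hu⟩⟩
end

section
/- There is no set P of (unsigned) permutation patterns such that the set of signed permutations whose window notation contains only positive values equals the set of signed permutations globally avoiding all patterns in P. -/
/-- Global containment of an (unsigned) pattern `p ∈ S_k` in a signed
permutation of size `n`: an occurrence may use positive and negative indices. -/
def GContains (n : ℕ) (w : ℤ → ℤ) {k : ℕ} (p : Equiv.Perm (Fin k)) : Prop :=
  ∃ i : Fin k → ℤ, StrictMono i ∧ (∀ a, i a ∈ windowSet n) ∧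
    ∀ a b, w (i a) < w (i b) ↔ p a < p b

theorem mem_windowSet_iff {n : ℕ} {x : ℤ} : x ∈ windowSet n ↔ x ≠ 0 ∧ -(n : ℤ) ≤ x ∧ x ≤ n := by
  simp only [windowSet, Set.mem_ofPred_eq]
  rcases abs_cases x with ⟨hx, _⟩ | ⟨hx, _⟩ <;> rw [hx] <;> omega

theorem isSignedPerm_of_involutive {n : ℕ} {w : ℤ → ℤ} (hodd : ∀ x, w (-x) = -w x)
    (hinv : Function.Involutive w) (hmaps : Set.MapsTo w (windowSet n) (windowSet n))
    (hfix : ∀ x, x ∉ windowSet n → w x = x) : IsSignedPerm n w :=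
  ⟨hodd, Set.InvOn.bijOn ⟨fun x _ => hinv x, fun x _ => hinv x⟩ hmaps hmaps, hfix⟩

theorem GContains.of_embedding {n m k : ℕ} {w w' : ℤ → ℤ} {p : Equiv.Perm (Fin k)}
    (f : ℤ → ℤ) (hf : StrictMonoOn f (windowSet n))
    (hmaps : Set.MapsTo f (windowSet n) (windowSet m))
    (hw : ∀ x ∈ windowSet n, ∀ y ∈ windowSet n, w' (f x) < w' (f y) ↔ w x < w y)
    (h : GContains n w p) : GContains m w' p := by
  obtain ⟨i, hi, hmem, hcmp⟩ := h
  exact ⟨f ∘ i, fun a b hab => hf (hmem a) (hmem b) (hi hab), fun a => hmaps (hmem a),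
    fun a b => (hw _ (hmem a) _ (hmem b)).trans (hcmp a b)⟩

/-- The signed permutation with window notation `[-1]`. -/
def negOnePerm : ℤ → ℤ := fun x => if x = 1 then -1 else if x = -1 then 1 else x

/-- The signed permutation with window notation `[2, 1]`. -/
def twoOnePerm : ℤ → ℤ := fun x =>
  if x = 1 then 2 else if x = -1 then -2 else if x = 2 then 1 else if x = -2 then -1 else x

theorem isSignedPerm_negOnePerm : IsSignedPerm 1 negOnePerm := by
  refine isSignedPerm_of_involutive ?_ ?_ ?_ ?_
  · intro x; unfold negOnePerm; grind
  · intro x; unfold negOnePerm; grind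
  · intro x hx; rw [mem_windowSet_iff] at hx ⊢; unfold negOnePerm; grind
  · intro x hx; rw [mem_windowSet_iff] at hx; unfold negOnePerm; grind

theorem isSignedPerm_twoOnePerm : IsSignedPerm 2 twoOnePerm := by
  refine isSignedPerm_of_involutive ?_ ?_ ?_ ?_
  · intro x; unfold twoOnePerm; grind
  · intro x; unfold twoOnePerm; grind
  · intro x hx; rw [mem_windowSet_iff] at hx ⊢; unfold twoOnePerm; grind
  · intro x hx; rw [mem_windowSet_iff] at hx; unfold twoOnePerm; grind

theorem twoOnePerm_pos {x : ℤ} (h₁ : 1 ≤ x) (h₂ : x ≤ 2) : 0 < twoOnePerm x := by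
  unfold twoOnePerm; grind

theorem GContains.twoOnePerm_of_negOnePerm {k : ℕ} {p : Equiv.Perm (Fin k)}
    (h : GContains 1 negOnePerm p) : GContains 2 twoOnePerm p := by
  refine h.of_embedding (fun x => if x = -1 then 1 else 2) ?_ ?_ ?_
  · intro x hx y hy hxy
    rw [mem_windowSet_iff] at hx hy; grind
  · intro x hx
    rw [mem_windowSet_iff] at hx ⊢; grind
  · intro x hx y hy
    rw [mem_windowSet_iff] at hx hy; unfold negOnePerm twoOnePerm; grind

/-- There is no set `P` of unsigned patterns such that the signed
permutations whose window notation contains only positive values are exactly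
the signed permutations globally avoiding every pattern in `P`. -/
theorem stmt5 :
    ¬ ∃ P : Set ((k : ℕ) × Equiv.Perm (Fin k)),
      ∀ (n : ℕ) (w : ℤ → ℤ), IsSignedPerm n w →
        ((∀ x : ℤ, 1 ≤ x → x ≤ (n : ℤ) → 0 < w x) ↔
          ∀ q ∈ P, ¬ GContains n w q.2) := by
  rintro ⟨P, hP⟩
  have h_not_pos : ¬ ∀ x : ℤ, 1 ≤ x → x ≤ ((1 : ℕ) : ℤ) → 0 < negOnePerm x := fun h => by
    simpa [negOnePerm] using h 1 le_rfl le_rfl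
  obtain ⟨q, hqP, hq⟩ : ∃ q ∈ P, GContains 1 negOnePerm q.2 := by
    simpa using (hP 1 negOnePerm isSignedPerm_negOnePerm).not.mp h_not_pos
  exact (hP 2 twoOnePerm isSignedPerm_twoOnePerm).mp (fun x h₁ h₂ => twoOnePerm_pos h₁ h₂) q hqP
    hq.twoOnePerm_of_negOnePerm
end

section
/- The number of signed permutations of size n that globally avoid the pattern 132 equals 2^n. -/
def p132 : Equiv.Perm (Fin 3) := Equiv.swap 1 2
def p213 : Equiv.Perm (Fin 3) := Equiv.swap 0 1
def p2143 : Equiv.Perm (Fin 4) := Equiv.swap 0 1 * Equiv.swap 2 3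

namespace SignedPattern

open Set

section Pattern

variable {α β : Type*}

def Has132On [LT α] [LT β] (s : Set α) (w : α → β) : Prop :=
  ∃ x ∈ s, ∃ y ∈ s, ∃ z ∈ s, x < y ∧ y < z ∧ w x < w z ∧ w z < w y

lemma has132On_conj [LinearOrder α] [LinearOrder β] {s : Set α} {t : Set β} {f : α → β}
    {f' : β → α} {w : α → α} (hf : StrictMonoOn f s) (hf' : StrictMonoOn f' t)
    (hfst : MapsTo f s t) (hf'ts : MapsTo f' t s) (hinv : LeftInvOn f' f s)
    (hw : MapsTo w s s) : Has132On t (f ∘ w ∘ f') ↔ Has132On s w := by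
  constructor
  · rintro ⟨x, hx, y, hy, z, hz, hxy, hyz, hxz, hzy⟩
    exact ⟨f' x, hf'ts hx, f' y, hf'ts hy, f' z, hf'ts hz, hf' hx hy hxy, hf' hy hz hyz,
      (hf.lt_iff_lt (hw (hf'ts hx)) (hw (hf'ts hz))).1 hxz,
      (hf.lt_iff_lt (hw (hf'ts hz)) (hw (hf'ts hy))).1 hzy⟩
  · rintro ⟨x, hx, y, hy, z, hz, hxy, hyz, hxz, hzy⟩
    refine ⟨f x, hfst hx, f y, hfst hy, f z, hfst hz, hf hx hy hxy, hf hy hz hyz, ?_, ?_⟩ <;>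
      simp only [Function.comp_apply, hinv hx, hinv hy, hinv hz]
    exacts [hf (hw hx) (hw hz) hxz, hf (hw hz) (hw hy) hzy]

end Pattern

lemma gContains_p132_iff {n : ℕ} {w : ℤ → ℤ} :
    GContains n w p132 ↔ Has132On (windowSet n) w := by
  have hp : p132 0 = 0 ∧ p132 1 = 2 ∧ p132 2 = 1 := by decide
  constructor
  · rintro ⟨i, hi, hmem, hpat⟩
    exact ⟨i 0, hmem 0, i 1, hmem 1, i 2, hmem 2, hi (by decide), hi (by decide),
      (hpat 0 2).2 (by simp [hp]), (hpat 2 1).2 (by simp [hp])⟩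
  · rintro ⟨x, hx, y, hy, z, hz, hxy, hyz, hxz, hzy⟩
    refine ⟨![x, y, z], ?_, ?_, ?_⟩
    · refine Fin.strictMono_iff_lt_succ.2 fun a => ?_
      fin_cases a <;> simpa
    · intro a
      fin_cases a <;> assumption
    · intro a b
      fin_cases a <;> fin_cases b <;> simp [hp] <;> omega

def UpSkipFreeOn (g : ℤ → ℤ) (a b : ℤ) : Prop :=
  ∀ j ∈ Ico a b, g (j + 1) ≤ g j + 1

section UpSkipFree

variable {g : ℤ → ℤ} {a b : ℤ}

lemma eq_add_of_forall_succ {k l : ℤ} (hkl : k ≤ l)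
    (h : ∀ j ∈ Ico k l, g (j + 1) = g j + 1) : g l = g k + (l - k) := by
  induction l, hkl using Int.leInduction with
  | base => simp
  | succ l hkl ih =>
    rw [h l ⟨hkl, by omega⟩, ih fun j hj => h j ⟨hj.1, by linarith [hj.2]⟩]
    ring

lemma UpSkipFreeOn.congr {g' : ℤ → ℤ} (hg : UpSkipFreeOn g a b) (h : EqOn g g' (Icc a b)) :
    UpSkipFreeOn g' a b := fun j hj => by
  rw [← h ⟨hj.1, hj.2.le⟩, ← h ⟨by linarith [hj.1], by linarith [hj.2]⟩]
  exact hg j hj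

namespace UpSkipFreeOn

variable (hg : UpSkipFreeOn g a b) (hinj : InjOn g (Icc a b))
include hg hinj

lemma apply_lt_of_apply_lt {s q r : ℤ} (has : a ≤ s) (hsq : s < q) (hqr : q ≤ r)
    (hrb : r ≤ b) (hq : g q < g s) : g r < g s := by
  induction r, hqr using Int.leInduction with
  | base => exact hq
  | succ r hqr ih =>
    have hr := ih (by omega)
    have hstep := hg r ⟨by omega, by omega⟩
    have hne : g (r + 1) ≠ g s := fun h => by
      have := hinj ⟨by omega, hrb⟩ ⟨has, by omega⟩ h
      omega
    omega

lemma eq_add_of_apply_le {k l : ℤ} (hak : a ≤ k) (hlb : l ≤ b) (hkl : g k ≤ g l) :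
    ∀ j, k ≤ j → j ≤ l → g j = g k + (j - k) := by
  suffices ∀ j, k ≤ j → j ≤ l → ∀ i, k ≤ i → i ≤ j → g i = g k + (i - k) from
    fun j hkj hjl => this j hkj hjl j hkj le_rfl
  intro j hkj
  induction j, hkj using Int.leInduction with
  | base => intro _ i hki hik; rw [le_antisymm hik hki]; ring
  | succ j hkj ih =>
    intro hjl i hki hij
    rcases hij.lt_or_eq with hij | rfl
    · exact ih (by omega) i hki (by omega)
    have hj := ih (by omega) j hkj le_rfl
    have hstep := hg j ⟨by omega, by omega⟩
    by_contra hne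
    rcases lt_or_ge (g (j + 1)) (g k) with hlow | hhigh
    · have := hg.apply_lt_of_apply_lt hinj hak (by omega) hjl hlb hlow
      omega
    · -- the value `g (j + 1)` was already taken in `[k, j]`
      set i := k + (g (j + 1) - g k)
      have hi : g i = g (j + 1) := by rw [ih (by omega) i (by omega) (by omega)]; ring
      have := hinj ⟨by omega, by omega⟩ ⟨by omega, by omega⟩ hi
      omega

lemma not_has132On : ¬ Has132On (Icc a b) g := by
  rintro ⟨x, hx, y, hy, z, hz, hxy, hyz, hxz, hzy⟩
  have hrun := hg.eq_add_of_apply_le hinj hx.1 hz.2 hxz.le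
  have := hrun y hxy.le (by omega)
  have := hrun z (by omega) le_rfl
  omega

lemma apply_lt_apply_iff {k l : ℤ} (hk : k ∈ Icc a b) (hl : l ∈ Icc a b) (hkl : k < l) :
    g k < g l ↔ ∀ j ∈ Ico k l, g (j + 1) = g j + 1 := by
  refine ⟨fun hlt j hj => ?_, fun h => ?_⟩
  · have hrun := hg.eq_add_of_apply_le hinj hk.1 hl.2 hlt.le
    rw [hrun (j + 1) (by linarith [hj.1]) (by linarith [hj.2]), hrun j hj.1 hj.2.le]
    ring
  · rw [eq_add_of_forall_succ hkl.le h]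
    omega

end UpSkipFreeOn

end UpSkipFree

section Perm

variable {g h : ℤ → ℤ} {m : ℤ}

lemma eq_card_filter_apply_le (hg : BijOn g (Icc 1 m) (Icc 1 m)) {k : ℤ} (hk : k ∈ Icc 1 m) :
    g k = (((Finset.Icc 1 m).filter fun l => g l ≤ g k).card : ℤ) := by
  have himage : ((Finset.Icc 1 m).filter fun l => g l ≤ g k).image g = Finset.Icc 1 (g k) := by
    ext v
    simp only [Finset.mem_image, Finset.mem_filter, Finset.mem_Icc]
    constructor
    · rintro ⟨l, ⟨hl, hle⟩, rfl⟩
      exact ⟨(hg.mapsTo hl).1, hle⟩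
    · rintro ⟨h1, h2⟩
      obtain ⟨l, hl, rfl⟩ := hg.surjOn ⟨h1, h2.trans (hg.mapsTo hk).2⟩
      exact ⟨l, ⟨hl, h2⟩, rfl⟩
  have hinj : InjOn g ((Finset.Icc 1 m).filter fun l => g l ≤ g k) :=
    hg.injOn.mono fun l hl => by simpa using (Finset.mem_filter.1 hl).1
  rw [← Finset.card_image_of_injOn hinj, himage, Int.card_Icc]
  have := (hg.mapsTo hk).1
  omega

/-- The ascents fix the relative order of the values, and the relative order fixes the
permutation (`eq_card_filter_apply_le`). -/
lemma UpSkipFreeOn.eqOn_of_ascents (hg : BijOn g (Icc 1 m) (Icc 1 m))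
    (hh : BijOn h (Icc 1 m) (Icc 1 m)) (hg' : UpSkipFreeOn g 1 m) (hh' : UpSkipFreeOn h 1 m)
    (hasc : ∀ j ∈ Ico 1 m, g (j + 1) = g j + 1 ↔ h (j + 1) = h j + 1) :
    EqOn g h (Icc 1 m) := by
  have hlt : ∀ k ∈ Icc 1 m, ∀ l ∈ Icc 1 m, k < l → (g k < g l ↔ h k < h l) := by
    intro k hk l hl hkl
    rw [hg'.apply_lt_apply_iff hg.injOn hk hl hkl, hh'.apply_lt_apply_iff hh.injOn hk hl hkl]
    exact forall₂_congr fun j hj => hasc j ⟨hk.1.trans hj.1, hj.2.trans_le hl.2⟩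
  have hle : ∀ k ∈ Icc 1 m, ∀ l ∈ Icc 1 m, g l ≤ g k ↔ h l ≤ h k := by
    intro k hk l hl
    rcases lt_trichotomy l k with hlk | rfl | hkl
    · rw [(hg.injOn.ne hl hk hlk.ne).le_iff_lt, (hh.injOn.ne hl hk hlk.ne).le_iff_lt]
      exact hlt l hl k hk hlk
    · simp
    · rw [← not_lt, ← not_lt, hlt k hk l hl hkl]
  intro k hk
  rw [eq_card_filter_apply_le hg hk, eq_card_filter_apply_le hh hk,
    Finset.filter_congr fun l hl => hle k hk l (by simpa using hl)]

def IsCentrallySymmetric (m : ℤ) (g : ℤ → ℤ) : Prop :=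
  ∀ k ∈ Icc 1 m, g (m + 1 - k) = m + 1 - g k

lemma IsCentrallySymmetric.succ_eq_iff (hsym : IsCentrallySymmetric m g) {p : ℤ}
    (hp : p ∈ Ico 1 m) : g (p + 1) = g p + 1 ↔ g (m - p + 1) = g (m - p) + 1 := by
  have h1 := hsym p ⟨hp.1, hp.2.le⟩
  have h2 := hsym (p + 1) ⟨by linarith [hp.1], by linarith [hp.2]⟩
  rw [show m - p + 1 = m + 1 - p by ring, show m - p = m + 1 - (p + 1) by ring, h1, h2]
  omega

lemma has132On_of_not_upSkipFreeOn (hg : BijOn g (Icc 1 m) (Icc 1 m))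
    (hsym : IsCentrallySymmetric m g) (hjump : ¬ UpSkipFreeOn g 1 m) : Has132On (Icc 1 m) g := by
  simp only [UpSkipFreeOn, not_forall, not_le] at hjump
  obtain ⟨k, ⟨hk1, hkm⟩, hjump⟩ := hjump
  have hk : k ∈ Icc 1 m := ⟨hk1, hkm.le⟩
  have hk' : k + 1 ∈ Icc 1 m := ⟨by omega, by omega⟩
  have hgk := hg.mapsTo hk
  obtain ⟨j, hj, hgj⟩ := hg.surjOn (show g k + 1 ∈ Icc 1 m from
    ⟨by linarith [hgk.1], by linarith [(hg.mapsTo hk').2]⟩)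
  obtain ⟨hj1, hjm⟩ := hj
  rcases lt_trichotomy j k with hjk | rfl | hkj
  · -- `j < k < k + 1` carry the pattern `213`, whose central mirror image is a `132`
    have := hsym _ hk
    have := hsym _ hk'
    have := hsym _ ⟨hj1, hjm⟩
    exact ⟨m + 1 - (k + 1), ⟨by omega, by omega⟩, m + 1 - k, ⟨by omega, by omega⟩,
      m + 1 - j, ⟨by omega, by omega⟩, by omega, by omega, by omega, by omega⟩
  · omega
  · have : j ≠ k + 1 := by rintro rfl; omega
    exact ⟨k, hk, k + 1, hk', j, ⟨hj1, hjm⟩, by omega, by omega, by omega, by omega⟩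

lemma has132On_iff_not_upSkipFreeOn (hg : BijOn g (Icc 1 m) (Icc 1 m))
    (hsym : IsCentrallySymmetric m g) : Has132On (Icc 1 m) g ↔ ¬ UpSkipFreeOn g 1 m :=
  ⟨fun h132 hs => hs.not_has132On hg.injOn h132, has132On_of_not_upSkipFreeOn hg hsym⟩

end Perm

def prevCut (C : Finset ℤ) (k : ℤ) : ℤ := (C.filter (· < k)).max.unbotD 0

def nextCut (C : Finset ℤ) (m k : ℤ) : ℤ := (C.filter (k ≤ ·)).min.untopD m

/-- The permutation of `[1, m]` whose blocks of consecutive increasing values are the intervals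
between consecutive cuts, placed in decreasing order: the blocks after the one of `k` take the
values `1, …, m - nextCut`, and `k` is the `(k - prevCut)`-th entry of its block. -/
def blockPerm (C : Finset ℤ) (m k : ℤ) : ℤ := m + k - prevCut C k - nextCut C m k

section Cuts

variable {C : Finset ℤ} {m k l c : ℤ}

lemma prevCut_mem_and_lt (h0 : 0 ∈ C) (hk : 0 < k) : prevCut C k ∈ C ∧ prevCut C k < k := by
  obtain ⟨a, ha⟩ := Finset.max_of_nonempty (s := C.filter (· < k)) ⟨0, by simpa [h0]⟩
  simpa [prevCut, ha] using Finset.mem_of_max ha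

lemma le_prevCut (hc : c ∈ C) (hck : c < k) : c ≤ prevCut C k := by
  have hmem : c ∈ C.filter (· < k) := Finset.mem_filter.2 ⟨hc, hck⟩
  obtain ⟨a, ha⟩ := Finset.max_of_nonempty ⟨c, hmem⟩
  simpa [prevCut, ha] using Finset.le_max_of_eq hmem ha

lemma nextCut_mem_and_le (hm : m ∈ C) (hk : k ≤ m) :
    nextCut C m k ∈ C ∧ k ≤ nextCut C m k := by
  obtain ⟨a, ha⟩ := Finset.min_of_nonempty (s := C.filter (k ≤ ·)) ⟨m, by simpa [hm]⟩
  simpa [nextCut, ha] using Finset.mem_of_min ha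

lemma nextCut_le (hc : c ∈ C) (hkc : k ≤ c) : nextCut C m k ≤ c := by
  have hmem : c ∈ C.filter (k ≤ ·) := Finset.mem_filter.2 ⟨hc, hkc⟩
  obtain ⟨a, ha⟩ := Finset.min_of_nonempty ⟨c, hmem⟩
  simpa [nextCut, ha] using Finset.min_le_of_eq hmem ha

variable (h0 : 0 ∈ C) (hm : m ∈ C)
include h0 hm

lemma blockPerm_eq_add (hk : 0 < k) (hkl : k ≤ l) (hl : l ≤ m)
    (hfree : ∀ c ∈ C, c < k ∨ l ≤ c) : blockPerm C m l = blockPerm C m k + (l - k) := by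
  obtain ⟨hak, hak'⟩ := prevCut_mem_and_lt h0 hk
  obtain ⟨hal, hal'⟩ := prevCut_mem_and_lt h0 (k := l) (by omega)
  obtain ⟨hbk, hbk'⟩ := nextCut_mem_and_le hm (k := k) (by omega)
  obtain ⟨hbl, hbl'⟩ := nextCut_mem_and_le hm hl
  have := le_prevCut (k := l) hak (by omega)
  have := le_prevCut (k := k) hal (by rcases hfree _ hal with h | h <;> omega)
  have := nextCut_le (m := m) (k := l) hbk (by rcases hfree _ hbk with h | h <;> omega)
  have := nextCut_le (m := m) (k := k) hbl (hkl.trans hbl')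
  unfold blockPerm
  omega

lemma blockPerm_lt (hk : 0 < k) (hl : l ≤ m) (hc : c ∈ C) (hkc : k ≤ c) (hcl : c < l) :
    blockPerm C m l < blockPerm C m k := by
  have := (prevCut_mem_and_lt h0 hk).2
  have := (nextCut_mem_and_le hm hl).2
  have := le_prevCut hc hcl
  have := nextCut_le (m := m) hc hkc
  unfold blockPerm
  omega

lemma mapsTo_blockPerm : MapsTo (blockPerm C m) (Icc 1 m) (Icc 1 m) := by
  rintro k ⟨hk1, hkm⟩
  have := prevCut_mem_and_lt h0 (k := k) (by omega)
  have := le_prevCut (k := k) h0 (by omega)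
  have := nextCut_mem_and_le hm hkm
  have := nextCut_le (m := m) (k := k) hm hkm
  exact ⟨by unfold blockPerm; omega, by unfold blockPerm; omega⟩

lemma bijOn_blockPerm : BijOn (blockPerm C m) (Icc 1 m) (Icc 1 m) := by
  refine ((finite_Icc 1 m).injOn_iff_bijOn_of_mapsTo (mapsTo_blockPerm h0 hm)).1 ?_
  suffices ∀ k ∈ Icc 1 m, ∀ l ∈ Icc 1 m, k < l → blockPerm C m k ≠ blockPerm C m l from
    fun k hk l hl heq => by_contra fun hne => ((lt_or_gt_of_ne hne).elim
      (fun hkl => this k hk l hl hkl heq) (fun hlk => this l hl k hk hlk heq.symm))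
  rintro k ⟨hk1, -⟩ l ⟨-, hlm⟩ hkl
  by_cases hcut : ∃ c ∈ C, k ≤ c ∧ c < l
  · obtain ⟨c, hc, hkc, hcl⟩ := hcut
    exact (blockPerm_lt h0 hm (by omega) hlm hc hkc hcl).ne'
  · push Not at hcut
    have := blockPerm_eq_add h0 hm (by omega) hkl.le hlm fun c hc =>
      (lt_or_ge c k).imp_right (hcut c hc)
    omega

lemma blockPerm_succ_eq_iff {p : ℤ} (hp : p ∈ Ico 1 m) :
    blockPerm C m (p + 1) = blockPerm C m p + 1 ↔ p ∉ C := by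
  obtain ⟨hp1, hpm⟩ := hp
  refine ⟨fun heq hpC => ?_, fun hpC => ?_⟩
  · have := blockPerm_lt h0 hm (by omega) (by omega) hpC le_rfl (lt_add_one p)
    omega
  · rw [blockPerm_eq_add h0 hm (by omega) (by omega) (by omega) fun c hc =>
      (lt_or_gt_of_ne (ne_of_mem_of_not_mem hc hpC)).imp_right (·)]
    ring

lemma upSkipFreeOn_blockPerm : UpSkipFreeOn (blockPerm C m) 1 m := by
  intro p hp
  by_cases hpC : p ∈ C
  · have := blockPerm_lt h0 hm (by linarith [hp.1]) (by linarith [hp.2]) hpC le_rfl (lt_add_one p)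
    omega
  · exact ((blockPerm_succ_eq_iff h0 hm hp).2 hpC).le

lemma isCentrallySymmetric_blockPerm (hsym : ∀ c ∈ C, m - c ∈ C) :
    IsCentrallySymmetric m (blockPerm C m) := by
  rintro k ⟨hk1, hkm⟩
  obtain ⟨hak, hak'⟩ := prevCut_mem_and_lt h0 (k := k) (by omega)
  obtain ⟨hbk, hbk'⟩ := nextCut_mem_and_le hm hkm
  obtain ⟨hak2, hak2'⟩ := prevCut_mem_and_lt h0 (k := m + 1 - k) (by omega)
  obtain ⟨hbk2, hbk2'⟩ := nextCut_mem_and_le hm (k := m + 1 - k) (by omega)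
  have := le_prevCut (k := m + 1 - k) (hsym _ hbk) (by omega)
  have := nextCut_le (m := m) (k := k) (hsym _ hak2) (by omega)
  have := nextCut_le (m := m) (k := m + 1 - k) (hsym _ hak) (by omega)
  have := le_prevCut (k := k) (hsym _ hbk2) (by omega)
  unfold blockPerm
  omega

end Cuts

lemma mem_windowSet_iff {n : ℕ} {x : ℤ} :
    x ∈ windowSet n ↔ (1 ≤ x ∧ x ≤ n) ∨ (-n ≤ x ∧ x ≤ -1) := by
  simp only [windowSet, mem_ofPred_eq, Int.abs_eq_natAbs]
  omega

/-- `lin n` and `unlin n` are inverse order isomorphisms between `{±1, …, ±n}` and `[1, 2n]`. -/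
def lin (n : ℕ) (x : ℤ) : ℤ := if 0 < x then x + n else x + n + 1

def unlin (n : ℕ) (k : ℤ) : ℤ := if k ≤ n then k - n - 1 else k - n

section Linearization

variable {n : ℕ}

lemma mapsTo_lin : MapsTo (lin n) (windowSet n) (Icc (1 : ℤ) (2 * n)) := by
  intro x hx
  rw [mem_windowSet_iff] at hx
  simp only [lin, mem_Icc]
  split_ifs <;> omega

lemma mapsTo_unlin : MapsTo (unlin n) (Icc (1 : ℤ) (2 * n)) (windowSet n) := by
  rintro k ⟨hk1, hk2⟩
  rw [mem_windowSet_iff, unlin]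
  split_ifs <;> omega

lemma leftInvOn_unlin_lin : LeftInvOn (unlin n) (lin n) (windowSet n) := by
  intro x hx
  rw [mem_windowSet_iff] at hx
  simp only [lin, unlin]
  split_ifs <;> omega

lemma leftInvOn_lin_unlin : LeftInvOn (lin n) (unlin n) (Icc (1 : ℤ) (2 * n)) := by
  rintro k ⟨hk1, hk2⟩
  simp only [lin, unlin]
  split_ifs <;> omega

lemma bijOn_lin : BijOn (lin n) (windowSet n) (Icc (1 : ℤ) (2 * n)) :=
  InvOn.bijOn ⟨leftInvOn_unlin_lin, leftInvOn_lin_unlin⟩ mapsTo_lin mapsTo_unlin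

lemma bijOn_unlin : BijOn (unlin n) (Icc (1 : ℤ) (2 * n)) (windowSet n) :=
  InvOn.bijOn ⟨leftInvOn_lin_unlin, leftInvOn_unlin_lin⟩ mapsTo_unlin mapsTo_lin

lemma strictMonoOn_lin : StrictMonoOn (lin n) (windowSet n) := by
  intro x hx y hy hxy
  rw [mem_windowSet_iff] at hx hy
  simp only [lin]
  split_ifs <;> omega

lemma strictMonoOn_unlin : StrictMonoOn (unlin n) (Icc (1 : ℤ) (2 * n)) := by
  rintro k ⟨hk1, hk2⟩ l ⟨hl1, hl2⟩ hkl
  simp only [unlin]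
  split_ifs <;> omega

lemma lin_neg {x : ℤ} (hx : x ∈ windowSet n) : lin n (-x) = 2 * n + 1 - lin n x := by
  rw [mem_windowSet_iff] at hx
  simp only [lin]
  split_ifs <;> omega

lemma unlin_sub {k : ℤ} (hk : k ∈ Icc (1 : ℤ) (2 * n)) :
    unlin n (2 * n + 1 - k) = -unlin n k := by
  obtain ⟨hk1, hk2⟩ := hk
  simp only [unlin]
  split_ifs <;> omega

end Linearization

def linPerm (n : ℕ) (w : ℤ → ℤ) : ℤ → ℤ := lin n ∘ w ∘ unlin n

open Classical in
noncomputable def ofLinPerm (n : ℕ) (g : ℤ → ℤ) (x : ℤ) : ℤ :=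
  if x ∈ windowSet n then unlin n (g (lin n x)) else x

section SignedPerm

variable {n : ℕ} {w : ℤ → ℤ} {g : ℤ → ℤ}

lemma bijOn_linPerm (hw : IsSignedPerm n w) :
    BijOn (linPerm n w) (Icc (1 : ℤ) (2 * n)) (Icc (1 : ℤ) (2 * n)) :=
  bijOn_lin.comp (hw.2.1.comp bijOn_unlin)

lemma isCentrallySymmetric_linPerm (hw : IsSignedPerm n w) :
    IsCentrallySymmetric (2 * n) (linPerm n w) := by
  intro k hk
  simp only [linPerm, Function.comp_apply]
  rw [unlin_sub hk, hw.1, lin_neg (hw.2.1.mapsTo (mapsTo_unlin hk))]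

lemma ofLinPerm_linPerm (hw : IsSignedPerm n w) : ofLinPerm n (linPerm n w) = w := by
  funext x
  by_cases hx : x ∈ windowSet n
  · simp only [ofLinPerm, if_pos hx, linPerm, Function.comp_apply, leftInvOn_unlin_lin hx,
      leftInvOn_unlin_lin (hw.2.1.mapsTo hx)]
  · rw [ofLinPerm, if_neg hx, hw.2.2 x hx]

lemma ofLinPerm_congr {g' : ℤ → ℤ} (h : EqOn g g' (Icc (1 : ℤ) (2 * n))) :
    ofLinPerm n g = ofLinPerm n g' := by
  funext x
  unfold ofLinPerm
  split_ifs with hx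
  · rw [h (mapsTo_lin hx)]
  · rfl

lemma linPerm_ofLinPerm (hg : MapsTo g (Icc (1 : ℤ) (2 * n)) (Icc (1 : ℤ) (2 * n))) :
    EqOn (linPerm n (ofLinPerm n g)) g (Icc (1 : ℤ) (2 * n)) := by
  intro k hk
  simp only [linPerm, ofLinPerm, Function.comp_apply, if_pos (mapsTo_unlin hk),
    leftInvOn_lin_unlin hk, leftInvOn_lin_unlin (hg hk)]

lemma isSignedPerm_ofLinPerm (hg : BijOn g (Icc (1 : ℤ) (2 * n)) (Icc (1 : ℤ) (2 * n)))
    (hsym : IsCentrallySymmetric (2 * n) g) : IsSignedPerm n (ofLinPerm n g) := by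
  have hneg : ∀ x, x ∈ windowSet n ↔ -x ∈ windowSet n := fun x => by
    simp only [mem_windowSet_iff]
    omega
  refine ⟨fun x => ?_, ?_, fun x hx => if_neg hx⟩
  · by_cases hx : x ∈ windowSet n
    · have hlin := mapsTo_lin hx
      rw [ofLinPerm, ofLinPerm, if_pos hx, if_pos ((hneg x).1 hx), lin_neg hx, hsym _ hlin,
        unlin_sub (hg.mapsTo hlin)]
    · rw [ofLinPerm, ofLinPerm, if_neg hx, if_neg (mt (hneg x).2 hx)]
  · exact (bijOn_unlin.comp (hg.comp bijOn_lin)).congr fun x hx => (if_pos hx).symm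

lemma not_gContains_p132_iff (hw : IsSignedPerm n w) :
    ¬ GContains n w p132 ↔ UpSkipFreeOn (linPerm n w) 1 (2 * n) := by
  rw [gContains_p132_iff, ← has132On_conj strictMonoOn_lin strictMonoOn_unlin mapsTo_lin
    mapsTo_unlin leftInvOn_unlin_lin hw.2.1.mapsTo]
  exact not_iff_comm.1
    (has132On_iff_not_upSkipFreeOn (bijOn_linPerm hw) (isCentrallySymmetric_linPerm hw)).symm

end SignedPerm

def cuts (n : ℕ) (T : Finset ℕ) : Finset ℤ :=
  insert 0 (insert (2 * (n : ℤ))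
    (T.image (fun t : ℕ => (n : ℤ) + t) ∪ T.image (fun t : ℕ => (n : ℤ) - t)))

noncomputable def blockSignedPerm (n : ℕ) (T : Finset ℕ) : ℤ → ℤ :=
  ofLinPerm n (blockPerm (cuts n T) (2 * n))

def upperDescents (n : ℕ) (w : ℤ → ℤ) : Finset ℕ :=
  (Finset.range n).filter fun t => linPerm n w (n + t + 1) ≠ linPerm n w (n + t) + 1

section PalindromicCuts

variable {n : ℕ} {T : Finset ℕ}

lemma zero_mem_cuts : 0 ∈ cuts n T := by simp [cuts]

lemma two_mul_mem_cuts : 2 * (n : ℤ) ∈ cuts n T := by simp [cuts]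

lemma two_mul_sub_mem_cuts {c : ℤ} (hc : c ∈ cuts n T) : 2 * n - c ∈ cuts n T := by
  simp only [cuts, Finset.mem_insert, Finset.mem_union, Finset.mem_image] at hc ⊢
  rcases hc with rfl | rfl | ⟨t, ht, rfl⟩ | ⟨t, ht, rfl⟩
  · exact Or.inr (Or.inl (by ring))
  · exact Or.inl (by ring)
  · exact Or.inr (Or.inr (Or.inr ⟨t, ht, by ring⟩))
  · exact Or.inr (Or.inr (Or.inl ⟨t, ht, by ring⟩))

lemma mem_cuts_iff {p : ℤ} (hp : p ∈ Ioo 0 (2 * (n : ℤ))) :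
    p ∈ cuts n T ↔ ∃ t ∈ T, (n : ℤ) + t = p ∨ (n : ℤ) - t = p := by
  obtain ⟨hp0, hpn⟩ := hp
  simp only [cuts, Finset.mem_insert, Finset.mem_union, Finset.mem_image]
  constructor
  · rintro (h | h | ⟨t, ht, h⟩ | ⟨t, ht, h⟩)
    · omega
    · omega
    · exact ⟨t, ht, Or.inl h⟩
    · exact ⟨t, ht, Or.inr h⟩
  · rintro ⟨t, ht, h | h⟩
    exacts [Or.inr (Or.inr (Or.inl ⟨t, ht, h⟩)), Or.inr (Or.inr (Or.inr ⟨t, ht, h⟩))]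

lemma add_mem_cuts_iff {t : ℕ} (ht : t < n) : (n : ℤ) + t ∈ cuts n T ↔ t ∈ T := by
  rw [mem_cuts_iff ⟨by omega, by omega⟩]
  constructor
  · rintro ⟨s, hs, h | h⟩
    · rwa [show t = s by omega]
    · rwa [show t = s by omega]
  · exact fun htT => ⟨t, htT, Or.inl rfl⟩

lemma bijOn_blockPerm_cuts :
    BijOn (blockPerm (cuts n T) (2 * n)) (Icc (1 : ℤ) (2 * n)) (Icc (1 : ℤ) (2 * n)) :=
  bijOn_blockPerm zero_mem_cuts two_mul_mem_cuts

lemma linPerm_blockSignedPerm :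
    EqOn (linPerm n (blockSignedPerm n T)) (blockPerm (cuts n T) (2 * n)) (Icc (1 : ℤ) (2 * n)) :=
  linPerm_ofLinPerm bijOn_blockPerm_cuts.mapsTo

lemma isSignedPerm_blockSignedPerm : IsSignedPerm n (blockSignedPerm n T) :=
  isSignedPerm_ofLinPerm bijOn_blockPerm_cuts
    (isCentrallySymmetric_blockPerm zero_mem_cuts two_mul_mem_cuts fun _ => two_mul_sub_mem_cuts)

lemma not_gContains_blockSignedPerm : ¬ GContains n (blockSignedPerm n T) p132 :=
  (not_gContains_p132_iff isSignedPerm_blockSignedPerm).2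
    ((upSkipFreeOn_blockPerm zero_mem_cuts two_mul_mem_cuts).congr
      linPerm_blockSignedPerm.symm)

lemma upperDescents_blockSignedPerm (hT : T ⊆ Finset.range n) :
    upperDescents n (blockSignedPerm n T) = T := by
  ext t
  simp only [upperDescents, Finset.mem_filter, Finset.mem_range]
  refine ⟨fun ⟨htn, hdes⟩ => ?_, fun htT => ?_⟩
  · have htn : (t : ℤ) < n := by exact_mod_cast htn
    rw [linPerm_blockSignedPerm ⟨by omega, by omega⟩,
      linPerm_blockSignedPerm ⟨by omega, by omega⟩,
      Ne, blockPerm_succ_eq_iff zero_mem_cuts two_mul_mem_cuts ⟨by omega, by omega⟩,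
      not_not, add_mem_cuts_iff (by omega)] at hdes
    exact hdes
  · have htn := Finset.mem_range.1 (hT htT)
    refine ⟨htn, ?_⟩
    rw [linPerm_blockSignedPerm ⟨by omega, by omega⟩,
      linPerm_blockSignedPerm ⟨by omega, by omega⟩,
      Ne, blockPerm_succ_eq_iff zero_mem_cuts two_mul_mem_cuts ⟨by omega, by omega⟩,
      not_not, add_mem_cuts_iff htn]
    exact htT

end PalindromicCuts

section Reconstruction

variable {n : ℕ} {w : ℤ → ℤ}

lemma mem_cuts_upperDescents_iff (hw : IsSignedPerm n w) {p : ℤ}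
    (hp : p ∈ Ico 1 (2 * (n : ℤ))) :
    p ∈ cuts n (upperDescents n w) ↔ linPerm n w (p + 1) ≠ linPerm n w p + 1 := by
  obtain ⟨hp1, hpn⟩ := hp
  have hsym := (isCentrallySymmetric_linPerm hw).succ_eq_iff ⟨hp1, hpn⟩
  rw [mem_cuts_iff ⟨by omega, hpn⟩]
  simp only [upperDescents, Finset.mem_filter, Finset.mem_range]
  constructor
  · rintro ⟨t, ⟨htn, hdes⟩, rfl | rfl⟩
    · exact hdes
    · rwa [Ne, hsym, show 2 * (n : ℤ) - (n - t) = n + t by ring]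
  · intro hdes
    rcases le_or_gt (n : ℤ) p with hnp | hpn'
    · refine ⟨(p - n).toNat, ⟨by omega, ?_⟩, Or.inl (by omega)⟩
      rwa [show (n : ℤ) + (p - n).toNat = p by omega]
    · refine ⟨(n - p).toNat, ⟨by omega, ?_⟩, Or.inr (by omega)⟩
      rw [show (n : ℤ) + (n - p).toNat = 2 * n - p by omega]
      exact fun h => hdes (hsym.2 h)

lemma eq_blockSignedPerm_upperDescents (hw : IsSignedPerm n w)
    (hs : UpSkipFreeOn (linPerm n w) 1 (2 * n)) :
    w = blockSignedPerm n (upperDescents n w) := by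
  calc w = ofLinPerm n (linPerm n w) := (ofLinPerm_linPerm hw).symm
    _ = blockSignedPerm n (upperDescents n w) := by
      refine ofLinPerm_congr (hs.eqOn_of_ascents (bijOn_linPerm hw) bijOn_blockPerm_cuts
        (upSkipFreeOn_blockPerm zero_mem_cuts two_mul_mem_cuts) fun p hp => ?_)
      rw [blockPerm_succ_eq_iff zero_mem_cuts two_mul_mem_cuts hp,
        mem_cuts_upperDescents_iff hw hp, not_not]

end Reconstruction

lemma avoiders_eq_image (n : ℕ) :
    {w : ℤ → ℤ | IsSignedPerm n w ∧ ¬ GContains n w p132} =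
      blockSignedPerm n '' ↑(Finset.range n).powerset := by
  ext w
  simp only [mem_ofPred_eq, mem_image, Finset.coe_powerset, mem_preimage, mem_powerset_iff,
    Finset.coe_subset]
  constructor
  · rintro ⟨hw, havoid⟩
    exact ⟨upperDescents n w, Finset.filter_subset _ _,
      (eq_blockSignedPerm_upperDescents hw ((not_gContains_p132_iff hw).1 havoid)).symm⟩
  · rintro ⟨T, -, rfl⟩
    exact ⟨isSignedPerm_blockSignedPerm, not_gContains_blockSignedPerm⟩

lemma injOn_blockSignedPerm (n : ℕ) : InjOn (blockSignedPerm n) ↑(Finset.range n).powerset :=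
  LeftInvOn.injOn (f₁' := upperDescents n) fun _ hT =>
    upperDescents_blockSignedPerm (Finset.mem_powerset.1 hT)

end SignedPattern

/-- The number of signed permutations of size `n` globally avoiding `132`
is `2^n`. -/
theorem stmt8 (n : ℕ) :
    Set.ncard {w : ℤ → ℤ | IsSignedPerm n w ∧ ¬ GContains n w p132} = 2 ^ n := by
  rw [SignedPattern.avoiders_eq_image, (SignedPattern.injOn_blockSignedPerm n).ncard_image,
    Set.ncard_coe_finset, Finset.card_powerset, Finset.card_range]
end

section
/- The number of palindromic compositions of 2n having at most k parts is ∑_{j=1}^{k} binomial(n-1, ⌊(j-1)/2⌋). -/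
/-!
A palindromic composition of even length `2m` is `a.reverse ++ a`, and one of odd length
`2m + 1` is `a.reverse ++ y :: a`; in both cases it is determined by its right half. For a
composition of `2n` the middle part `y` is even, so halving it turns the right half (middle
part included) into a composition of `n` with `⌈j / 2⌉` parts, `j` the length, and conversely.
Splitting off the first part, the numbers of compositions of `n + 1` with `m + 1` parts obey
Pascal's rule, so they are `n.choose m`.
-/

open Finset

namespace List

variable {α : Type*} {l : List α} {m : ℕ}

theorem exists_eq_reverse_append_of_reverse_eq (hl : l.reverse = l) (hlen : l.length = 2 * m) :
    ∃ a : List α, a.length = m ∧ l = a.reverse ++ a := by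
  refine ⟨l.drop m, by rw [length_drop]; omega, ?_⟩
  conv_lhs => rw [← take_append_drop m l]
  rw [← reverse_reverse (take m l), reverse_take, hl, show l.length - m = m by omega]

theorem exists_eq_reverse_append_cons_of_reverse_eq (hl : l.reverse = l)
    (hlen : l.length = 2 * m + 1) :
    ∃ (a : List α) (y : α), a.length = m ∧ l = a.reverse ++ y :: a := by
  refine ⟨l.drop (m + 1), l[m]'(by omega), by rw [length_drop]; omega, ?_⟩
  conv_lhs => rw [← take_append_drop m l, drop_eq_getElem_cons (by omega)]
  rw [← reverse_reverse (take m l), reverse_take, hl, show l.length - m = m + 1 by omega]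

end List

def compositionsOfLength : ℕ → ℕ → Finset (List ℕ)
  | n, 0 => if n = 0 then {[]} else ∅
  | n, m + 1 => (range n).biUnion fun r =>
      (compositionsOfLength r m).map ⟨List.cons (n - r), List.cons_injective⟩

theorem mem_compositionsOfLength {n m : ℕ} {l : List ℕ} :
    l ∈ compositionsOfLength n m ↔ (∀ x ∈ l, 0 < x) ∧ l.sum = n ∧ l.length = m := by
  induction m generalizing n l with
  | zero =>
    rw [compositionsOfLength, List.length_eq_zero_iff]
    split_ifs with hn <;> aesop
  | succ m ih =>
    simp only [compositionsOfLength, mem_biUnion, mem_range, mem_map, Function.Embedding.coeFn_mk,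
      ih]
    constructor
    · rintro ⟨r, hr, t, ⟨ht_pos, rfl, rfl⟩, rfl⟩
      refine ⟨?_, by rw [List.sum_cons]; omega, rfl⟩
      simpa using ⟨by omega, ht_pos⟩
    · rintro ⟨hpos, rfl, hlen⟩
      obtain ⟨x, t, rfl⟩ := List.exists_cons_of_length_eq_add_one hlen
      have hx : 0 < x := hpos x (by simp)
      refine ⟨t.sum, by rw [List.sum_cons]; omega, t,
        ⟨fun y hy => hpos y (by simp [hy]), rfl, ?_⟩, by simp⟩
      simpa using hlen

theorem card_compositionsOfLength_add_one (n m : ℕ) :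
    #(compositionsOfLength n (m + 1)) = ∑ r ∈ range n, #(compositionsOfLength r m) := by
  rw [compositionsOfLength, card_biUnion]
  · simp only [card_map]
  · intro r hr s hs hrs
    simp only [coe_range, Set.mem_Iio] at hr hs
    simp only [Function.onFun, disjoint_left, mem_map, Function.Embedding.coeFn_mk]
    rintro _ ⟨t, -, rfl⟩ ⟨u, -, h⟩
    exact hrs (by injection h; omega)

theorem card_compositionsOfLength_add_one_add_one (n m : ℕ) :
    #(compositionsOfLength (n + 1) (m + 1)) = n.choose m := by
  induction n generalizing m with
  | zero => cases m <;> simp [compositionsOfLength]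
  | succ n ih =>
    rw [card_compositionsOfLength_add_one, sum_range_succ, ← card_compositionsOfLength_add_one,
      ih]
    cases m with
    | zero => simp [compositionsOfLength]
    | succ m => rw [ih, Nat.choose_succ_succ', add_comm]

def palindromicCompositionsOfLength (n m : ℕ) : Finset (List ℕ) :=
  (compositionsOfLength n m).filter fun l => l.reverse = l

theorem mem_palindromicCompositionsOfLength {n m : ℕ} {l : List ℕ} :
    l ∈ palindromicCompositionsOfLength n m ↔
      ((∀ x ∈ l, 0 < x) ∧ l.sum = n ∧ l.length = m) ∧ l.reverse = l := by
  rw [palindromicCompositionsOfLength, mem_filter, mem_compositionsOfLength]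

theorem palindromicCompositionsOfLength_two_mul_two_mul (n m : ℕ) :
    palindromicCompositionsOfLength (2 * n) (2 * m) =
      (compositionsOfLength n m).image fun b => b.reverse ++ b := by
  ext l
  simp only [mem_palindromicCompositionsOfLength, mem_image, mem_compositionsOfLength]
  constructor
  · rintro ⟨⟨hpos, hsum, hlen⟩, hl⟩
    obtain ⟨a, rfl, rfl⟩ := List.exists_eq_reverse_append_of_reverse_eq hl hlen
    simp only [List.mem_append, List.mem_reverse, List.sum_append, List.sum_reverse] at hpos hsum
    exact ⟨a, ⟨fun x hx => hpos x (Or.inr hx), by omega, rfl⟩, rfl⟩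
  · rintro ⟨b, ⟨hpos, rfl, rfl⟩, rfl⟩
    refine ⟨⟨?_, by rw [List.sum_append, List.sum_reverse]; ring,
      by rw [List.length_append, List.length_reverse]; ring⟩, by simp⟩
    simpa using hpos

theorem palindromicCompositionsOfLength_two_mul_two_mul_add_one (n m : ℕ) :
    palindromicCompositionsOfLength (2 * n) (2 * m + 1) =
      (compositionsOfLength n (m + 1)).image
        fun b => b.tail.reverse ++ b.modifyHead (2 * ·) := by
  ext l
  simp only [mem_palindromicCompositionsOfLength, mem_image, mem_compositionsOfLength]
  constructor
  · rintro ⟨⟨hpos, hsum, hlen⟩, hl⟩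
    obtain ⟨a, y, rfl, rfl⟩ := List.exists_eq_reverse_append_cons_of_reverse_eq hl hlen
    simp only [List.mem_append, List.mem_reverse, List.mem_cons, List.sum_append,
      List.sum_reverse, List.sum_cons] at hpos hsum
    have hy : 0 < y := hpos y (by simp)
    refine ⟨y / 2 :: a, ⟨?_, ?_, by simp⟩, ?_⟩
    · simpa using ⟨by omega, fun x hx => hpos x (by simp [hx])⟩
    · rw [List.sum_cons]; omega
    · rw [List.tail_cons, List.modifyHead_cons, Nat.mul_div_cancel' (by omega)]
  · rintro ⟨b, ⟨hpos, rfl, hlen⟩, rfl⟩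
    obtain ⟨x, a, rfl⟩ := List.exists_cons_of_length_eq_add_one hlen
    simp only [List.tail_cons, List.modifyHead_cons]
    refine ⟨⟨?_, ?_, ?_⟩, by simp⟩
    · rw [List.forall_mem_cons] at hpos
      simp only [List.mem_append, List.mem_reverse, List.mem_cons]
      rintro z (hz | rfl | hz)
      · exact hpos.2 z hz
      · omega
      · exact hpos.2 z hz
    · simp only [List.sum_append, List.sum_reverse, List.sum_cons]
      ring
    · simp only [List.length_cons, List.length_append, List.length_reverse] at hlen ⊢
      omega

theorem card_palindromicCompositionsOfLength_two_mul (n j : ℕ) :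
    #(palindromicCompositionsOfLength (2 * n) j) = #(compositionsOfLength n ((j + 1) / 2)) := by
  obtain ⟨m, rfl | rfl⟩ := Nat.even_or_odd' j
  · rw [palindromicCompositionsOfLength_two_mul_two_mul, card_image_of_injective,
      show (2 * m + 1) / 2 = m by omega]
    intro b b' h
    have hlen : b.reverse.length = b'.reverse.length := by
      simpa [← two_mul] using congrArg List.length h
    exact (List.append_inj h hlen).2
  · rw [palindromicCompositionsOfLength_two_mul_two_mul_add_one, card_image_of_injOn,
      show (2 * m + 1 + 1) / 2 = m + 1 by omega]
    intro b hb b' hb' h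
    obtain ⟨x, a, rfl⟩ :=
      List.exists_cons_of_length_eq_add_one (mem_compositionsOfLength.1 hb).2.2
    obtain ⟨x', a', rfl⟩ :=
      List.exists_cons_of_length_eq_add_one (mem_compositionsOfLength.1 hb').2.2
    simp only [List.tail_cons, List.modifyHead_cons] at h
    have hlen : a.reverse.length = a'.reverse.length := by
      have := congrArg List.length h
      simp only [List.length_append, List.length_reverse, List.length_cons] at this ⊢
      omega
    obtain ⟨-, hmid⟩ := List.append_inj h hlen
    simp only [List.cons.injEq] at hmid
    rw [hmid.2, Nat.eq_of_mul_eq_mul_left two_pos hmid.1]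

theorem ncard_palindromic_compositions_length_le {n : ℕ} (hn : n ≠ 0) (k : ℕ) :
    Set.ncard {c : List ℕ | (∀ x ∈ c, 0 < x) ∧ c.sum = n ∧ c.reverse = c ∧
        c.length ≤ k} =
      ∑ j ∈ Icc 1 k, #(palindromicCompositionsOfLength n j) := by
  have hunion : {c : List ℕ | (∀ x ∈ c, 0 < x) ∧ c.sum = n ∧ c.reverse = c ∧
      c.length ≤ k} =
      ↑((Icc 1 k).biUnion (palindromicCompositionsOfLength n)) := by
    ext c
    simp only [Set.mem_ofPred_eq, coe_biUnion, mem_coe, mem_Icc,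
      mem_palindromicCompositionsOfLength, Set.mem_iUnion, exists_prop]
    constructor
    · rintro ⟨hpos, hsum, hrev, hlen⟩
      have hne : c ≠ [] := by rintro rfl; exact hn hsum.symm
      exact ⟨c.length, ⟨List.length_pos_iff.2 hne, hlen⟩, ⟨hpos, hsum, rfl⟩, hrev⟩
    · rintro ⟨j, ⟨-, hjk⟩, ⟨hpos, hsum, rfl⟩, hrev⟩
      exact ⟨hpos, hsum, hrev, hjk⟩
  have hdisj : (Icc 1 k : Set ℕ).PairwiseDisjoint (palindromicCompositionsOfLength n) := by
    intro i _ j _ hij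
    simp only [Function.onFun, disjoint_left, mem_palindromicCompositionsOfLength]
    rintro l ⟨⟨-, -, rfl⟩, -⟩ ⟨⟨-, -, h⟩, -⟩
    exact hij h
  rw [hunion, Set.ncard_coe_finset, card_biUnion hdisj]

/-- The number of palindromic compositions of `2n` having at most `k` parts
is `∑_{j=1}^{k} (n-1).choose ⌊(j-1)/2⌋`. -/
theorem stmt12 (n k : ℕ) (hn : 1 ≤ n) :
    Set.ncard {c : List ℕ | (∀ x ∈ c, 0 < x) ∧ c.sum = 2 * n ∧ c.reverse = c ∧
        c.length ≤ k} =
      ∑ j ∈ Finset.Icc 1 k, (n - 1).choose ((j - 1) / 2) := by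
  rw [ncard_palindromic_compositions_length_le (by omega)]
  refine sum_congr rfl fun j hj => ?_
  obtain ⟨n, rfl⟩ := Nat.exists_eq_add_of_le' hn
  rw [card_palindromicCompositionsOfLength_two_mul, Nat.add_sub_cancel,
    show (j + 1) / 2 = (j - 1) / 2 + 1 by rw [mem_Icc] at hj; omega,
    card_compositionsOfLength_add_one_add_one]
end

section
/- Define for fixed k ≥ 1 the sequence f^{(k)}_i by f^{(k)}_i = 1 if i = ⌊k/2⌋+1, f^{(k)}_i = 0 for any other i with 1 ≤ i ≤ k, and f^{(k)}_i = ∑_{j=1}^{k} f^{(k)}_{i-j} for i > k. Then f^{(k)}_{n+k+1} = 2^n for 0 ≤ n ≤ ⌊k/2⌋, and f^{(k)}_{n+k+1} = 2^n − 2^{n−⌊k/2⌋−1} for ⌊k/2⌋ < n < k. -/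
/-!
Summing the recurrence over two consecutive windows gives
`f (n + k + 2) + f (n + 1) = 2 * f (n + k + 1)`, so past index `k` the sequence doubles at each
step, minus the initial value that just left the window. Starting from `f (k + 1) = 1`, the only
initial value that ever leaves with nonzero weight is the `1` at index `⌊k/2⌋ + 1`, which is
subtracted once at step `⌊k/2⌋ + 1` and then doubles along with everything else.
-/

open Finset

section Recurrence

variable {M : Type*} [AddCommMonoid M] {k : ℕ} {f : ℕ → M}

theorem apply_add_succ_eq_sum_range (hrec : ∀ i, k < i → f i = ∑ j ∈ Icc 1 k, f (i - j))
    (n : ℕ) : f (n + k + 1) = ∑ i ∈ range k, f (n + 1 + i) := by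
  rw [hrec _ (by omega), ← Ico_add_one_right_eq_Icc, sum_Ico_eq_sum_range, Nat.add_sub_cancel,
    ← sum_range_reflect]
  refine sum_congr rfl fun i hi => congrArg f ?_
  rw [mem_range] at hi
  omega

theorem apply_add_two_add_apply_succ (hrec : ∀ i, k < i → f i = ∑ j ∈ Icc 1 k, f (i - j))
    (n : ℕ) : f (n + k + 2) + f (n + 1) = f (n + k + 1) + f (n + k + 1) := by
  have window_succ := apply_add_succ_eq_sum_range hrec (n + 1)
  have window := apply_add_succ_eq_sum_range hrec n
  calc f (n + k + 2) + f (n + 1)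
      = ∑ i ∈ range (k + 1), f (n + 1 + i) := by
        rw [sum_range_succ', show n + k + 2 = n + 1 + k + 1 by omega, window_succ, add_zero]
        exact congrArg (· + _) (sum_congr rfl fun i _ => congrArg f (by omega))
    _ = f (n + k + 1) + f (n + k + 1) := by
        rw [sum_range_succ, ← window, show n + 1 + k = n + k + 1 by omega]

end Recurrence

section CenteredSeed

variable {k : ℕ} {f : ℕ → ℕ} (h1 : f (k / 2 + 1) = 1)
  (h0 : ∀ i, 1 ≤ i → i ≤ k → i ≠ k / 2 + 1 → f i = 0)
  (hrec : ∀ i, k < i → f i = ∑ j ∈ Icc 1 k, f (i - j))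
include h1 h0 hrec

theorem apply_succ_eq_one (hk : 1 ≤ k) : f (k + 1) = 1 := by
  rw [← zero_add k, apply_add_succ_eq_sum_range hrec,
    sum_eq_single_of_mem (k / 2) (mem_range.mpr (by omega))]
  · rwa [add_comm]
  · intro i hi hne
    rw [mem_range] at hi
    exact h0 _ (by omega) (by omega) (by omega)

theorem apply_add_succ_eq_two_pow (hk : 1 ≤ k) :
    ∀ n ≤ k / 2, f (n + k + 1) = 2 ^ n
  | 0, _ => by rw [zero_add, apply_succ_eq_one h1 h0 hrec hk, pow_zero]
  | n + 1, hn => by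
    have step := apply_add_two_add_apply_succ hrec n
    have ih := apply_add_succ_eq_two_pow hk n (by omega)
    rw [h0 (n + 1) (by omega) (by omega) (by omega)] at step
    rw [show n + 1 + k + 1 = n + k + 2 by omega, pow_succ]
    omega

theorem apply_add_succ_add_two_pow (hk : 1 ≤ k) :
    ∀ m, k / 2 + 1 + m < k → f (k / 2 + 1 + m + k + 1) + 2 ^ m = 2 ^ (k / 2 + 1 + m)
  | 0, _ => by
    have step := apply_add_two_add_apply_succ hrec (k / 2)
    have h := apply_add_succ_eq_two_pow h1 h0 hrec hk (k / 2) le_rfl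
    rw [h1] at step
    rw [show k / 2 + 1 + 0 + k + 1 = k / 2 + k + 2 by omega, pow_succ]
    omega
  | m + 1, hm => by
    have step := apply_add_two_add_apply_succ hrec (k / 2 + 1 + m)
    have ih := apply_add_succ_add_two_pow hk m (by omega)
    rw [h0 (k / 2 + 1 + m + 1) (by omega) (by omega) (by omega)] at step
    rw [show k / 2 + 1 + (m + 1) + k + 1 = k / 2 + 1 + m + k + 2 by omega, ← add_assoc,
      pow_succ, pow_succ]
    omega

end CenteredSeed

/-- Closed formulas for the Fibonacci-like sequence `f^{(k)}`. -/
theorem stmt13 (k : ℕ) (hk : 1 ≤ k) (f : ℕ → ℕ)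
    (h1 : f (k / 2 + 1) = 1)
    (h0 : ∀ i, 1 ≤ i → i ≤ k → i ≠ k / 2 + 1 → f i = 0)
    (hrec : ∀ i, k < i → f i = ∑ j ∈ Finset.Icc 1 k, f (i - j)) :
    (∀ n : ℕ, n ≤ k / 2 → f (n + k + 1) = 2 ^ n) ∧
    (∀ n : ℕ, k / 2 < n → n < k → f (n + k + 1) = 2 ^ n - 2 ^ (n - k / 2 - 1)) := by
  refine ⟨apply_add_succ_eq_two_pow h1 h0 hrec hk, fun n hlo hhi => ?_⟩
  obtain ⟨m, rfl⟩ : ∃ m, n = k / 2 + 1 + m := ⟨n - (k / 2 + 1), by omega⟩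
  have h := apply_add_succ_add_two_pow h1 h0 hrec hk m hhi
  rw [show k / 2 + 1 + m - k / 2 - 1 = m by omega]
  omega
end

section
/- The number of palindromic compositions of 2n whose parts are all at most k satisfies the recurrence a_n = ∑_{j=1}^{k} a_{n-j} for n > k (where a_m counts palindromic compositions of 2m with all parts at most k), with initial values a_n = 2^n for 0 ≤ n ≤ ⌊k/2⌋ and a_n = 2^n − 2^{n−⌊k/2⌋−1} for ⌊k/2⌋ < n < k (with a_0 = 1 counting the empty composition). -/
/-!
A palindrome with sum `2m` is determined by its first half `b` and an optional central part,
which is then even, say `2j` with `1 ≤ j ≤ k / 2`, and `b` is a composition of `m - j`. So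
`a m = c m + c (m - 1) + ⋯ + c (m - min m (k / 2))`, where `c t` counts compositions of `t` with
parts at most `k`. The sequence `c` obeys the `k`-step recurrence, hence so does every such
window sum once `n > k`; and `c 0 + ⋯ + c t = 2 ^ t` for `t ≤ k`, which gives the initial values.
-/

open Finset

def boundedCompositions (k : ℕ) : ℕ → Finset (List ℕ)
  | 0 => {[]}
  | n + 1 =>
    (Icc 1 (min k (n + 1))).attach.biUnion
      fun i => (boundedCompositions k (n + 1 - i.1)).image (List.cons i.1)
decreasing_by
  have := (mem_Icc.1 i.2).1; omega

theorem mem_boundedCompositions {k n : ℕ} {l : List ℕ} :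
    l ∈ boundedCompositions k n ↔ (∀ x ∈ l, 0 < x ∧ x ≤ k) ∧ l.sum = n := by
  induction n using Nat.strong_induction_on generalizing l with
  | _ n ih =>
  match n, l with
  | 0, [] => simp [boundedCompositions]
  | n + 1, [] => simp [boundedCompositions]
  | 0, x :: t => simp [boundedCompositions]; omega
  | n + 1, x :: t =>
    rw [boundedCompositions]
    simp only [mem_biUnion, mem_attach, mem_image, true_and, Subtype.exists, mem_Icc,
      List.cons.injEq, List.forall_mem_cons, List.sum_cons]
    constructor
    · rintro ⟨_, ⟨h1, h2⟩, _, ht, rfl, rfl⟩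
      rw [ih _ (by omega)] at ht
      exact ⟨⟨⟨h1, h2.trans (min_le_left _ _)⟩, ht.1⟩, by omega⟩
    · rintro ⟨⟨⟨h1, h2⟩, ht⟩, hs⟩
      exact ⟨x, ⟨h1, le_min h2 (by omega)⟩, t, (ih _ (by omega)).2 ⟨ht, by omega⟩, rfl, rfl⟩

theorem card_boundedCompositions_of_pos {k n : ℕ} (hn : 0 < n) :
    #(boundedCompositions k n) = ∑ i ∈ Icc 1 (min k n), #(boundedCompositions k (n - i)) := by
  obtain ⟨n, rfl⟩ := Nat.exists_eq_add_one_of_ne_zero hn.ne'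
  rw [boundedCompositions, card_biUnion, ← sum_attach (Icc 1 (min k (n + 1)))]
  · exact sum_congr rfl fun i _ => card_image_of_injective _ List.cons_injective
  · intro i _ j _ hij
    simp only [disjoint_left, mem_image]
    rintro _ ⟨b, -, rfl⟩ ⟨b', -, h⟩
    exact hij (Subtype.ext (List.cons_eq_cons.1 h).1.symm)

section WindowSums

variable {M : Type*} [AddCommMonoid M]

def trailingSum (c : ℕ → M) (r m : ℕ) : M := ∑ j ∈ range (min m r + 1), c (m - j)

theorem trailingSum_add_sum_range (c : ℕ → M) (r n : ℕ) :
    trailingSum c r n + ∑ s ∈ range (n - r), c s = ∑ s ∈ range (n + 1), c s := by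
  wlog h : r ≤ n
  · rw [trailingSum, min_eq_left (by omega), Nat.sub_eq_zero_of_le (by omega)]
    simpa [trailingSum] using this c n n le_rfl
  rw [trailingSum, min_eq_right h]
  induction r with
  | zero => simp [sum_range_succ, add_comm]
  | succ r ih =>
    rw [sum_range_succ _ (r + 1), ← ih (by omega), show n - r = n - (r + 1) + 1 by omega,
      sum_range_succ _ (n - (r + 1))]
    abel

theorem trailingSum_eq_sum_trailingSum {c : ℕ → M} {k r n : ℕ}
    (hc : ∀ t, 0 < t → c t = ∑ i ∈ Icc 1 (min k t), c (t - i)) (hr : r ≤ k) (hn : k < n) :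
    trailingSum c r n = ∑ i ∈ Icc 1 k, trailingSum c r (n - i) :=
  calc ∑ j ∈ range (min n r + 1), c (n - j)
      = ∑ j ∈ range (r + 1), ∑ i ∈ Icc 1 (min k (n - j)), c (n - i - j) := by
        rw [min_eq_right (by omega)]
        refine sum_congr rfl fun j hj => ?_
        rw [hc _ (by simp only [mem_range] at hj; omega)]
        exact sum_congr rfl fun i _ => by rw [Nat.sub_right_comm]
    _ = ∑ i ∈ Icc 1 k, ∑ j ∈ range (min (n - i) r + 1), c (n - i - j) :=
        sum_comm' fun j i => by simp only [mem_range, mem_Icc]; omega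

theorem sum_range_eq_two_pow {R : Type*} [Semiring R] {c : ℕ → R} {k : ℕ} (h0 : c 0 = 1)
    (hc : ∀ t, 0 < t → c t = ∑ i ∈ Icc 1 (min k t), c (t - i)) {n : ℕ} (hn : n ≤ k) :
    ∑ s ∈ range (n + 1), c s = 2 ^ n := by
  induction n with
  | zero => simp [h0]
  | succ n ih =>
    have reflect : ∑ i ∈ Icc 1 (n + 1), c (n + 1 - i) = ∑ s ∈ range (n + 1), c s :=
      sum_nbij' (fun i => n + 1 - i) (fun s => n + 1 - s)
        (fun i hi => by simp only [mem_Icc, mem_range] at *; omega)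
        (fun s hs => by simp only [mem_Icc, mem_range] at *; omega)
        (fun i hi => by simp only [mem_Icc] at hi; omega)
        (fun s hs => by simp only [mem_range] at hs; omega) fun _ _ => rfl
    rw [sum_range_succ, ih (by omega), hc _ n.succ_pos, min_eq_right hn, reflect, ih (by omega),
      pow_succ, mul_two]

end WindowSums

/-- `j = 0` stands for an even-length palindrome, without central part. -/
def mirror (j : ℕ) (b : List ℕ) : List ℕ := b ++ (if j = 0 then [] else [2 * j]) ++ b.reverse

theorem List.Palindrome.exists_eq_append_reverse {α : Type*} {l : List α} (p : l.Palindrome) :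
    (∃ b, l = b ++ b.reverse) ∨ ∃ b x, l = b ++ x :: b.reverse := by
  induction p with
  | nil => exact .inl ⟨[], rfl⟩
  | singleton x => exact .inr ⟨[], x, rfl⟩
  | cons_concat x _ ih =>
    rcases ih with ⟨b, rfl⟩ | ⟨b, y, rfl⟩
    · exact .inl ⟨x :: b, by simp⟩
    · exact .inr ⟨x :: b, y, by simp⟩

theorem sum_mirror (j : ℕ) (b : List ℕ) : (mirror j b).sum = 2 * b.sum + 2 * j := by
  unfold mirror; split_ifs <;> simp [*] <;> omega

theorem reverse_mirror (j : ℕ) (b : List ℕ) : (mirror j b).reverse = mirror j b := by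
  unfold mirror; split_ifs <;> simp

theorem mem_mirror {j x : ℕ} {b : List ℕ} : x ∈ mirror j b ↔ x ∈ b ∨ (j ≠ 0 ∧ x = 2 * j) := by
  unfold mirror; split_ifs <;> simp [*]; tauto

theorem mirror_injective2 : Function.Injective2 mirror := by
  intro j j' b b' h
  have hlen : b.length = b'.length := by
    have := congrArg List.length h
    simp only [mirror, List.length_append, List.length_reverse] at this
    split_ifs at this <;> simp at this <;> omega
  have hb : b = b' := by simpa [mirror, hlen] using congrArg (List.take b.length) h
  have hsum := congrArg List.sum h
  rw [sum_mirror, sum_mirror, hb] at hsum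
  exact ⟨by omega, hb⟩

theorem palindrome_iff_exists_mirror {k m : ℕ} {l : List ℕ} :
    ((∀ x ∈ l, 0 < x ∧ x ≤ k) ∧ l.sum = 2 * m ∧ l.reverse = l) ↔
      ∃ j ∈ range (min m (k / 2) + 1), ∃ b ∈ boundedCompositions k (m - j), mirror j b = l := by
  simp only [mem_range, mem_boundedCompositions]
  constructor
  · rintro ⟨hparts, hsum, hpal⟩
    rcases (List.Palindrome.of_reverse_eq hpal).exists_eq_append_reverse with
      ⟨b, rfl⟩ | ⟨b, x, rfl⟩
    · simp only [List.sum_append, List.sum_reverse] at hsum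
      refine ⟨0, by omega, b, ⟨fun y hy => hparts y (by simp [hy]), by omega⟩, by simp [mirror]⟩
    · obtain ⟨hx0, hxk⟩ := hparts x (by simp)
      simp only [List.sum_append, List.sum_cons, List.sum_reverse] at hsum
      refine ⟨x / 2, by omega, b, ⟨fun y hy => hparts y (by simp [hy]), by omega⟩, ?_⟩
      simp [mirror, show x / 2 ≠ 0 by omega, show 2 * (x / 2) = x by omega]
  · rintro ⟨j, hj, b, ⟨hparts, hsum⟩, rfl⟩
    refine ⟨fun x hx => ?_, by rw [sum_mirror]; omega, reverse_mirror j b⟩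
    rcases mem_mirror.1 hx with hx | ⟨hj0, rfl⟩
    · exact hparts x hx
    · omega

theorem ncard_palindromes (k m : ℕ) :
    {l : List ℕ | (∀ x ∈ l, 0 < x ∧ x ≤ k) ∧ l.sum = 2 * m ∧ l.reverse = l}.ncard =
      trailingSum (fun t => #(boundedCompositions k t)) (k / 2) m := by
  have hset : {l : List ℕ | (∀ x ∈ l, 0 < x ∧ x ≤ k) ∧ l.sum = 2 * m ∧ l.reverse = l} =
      ((range (min m (k / 2) + 1)).sigma fun j => boundedCompositions k (m - j)).image
        fun p => mirror p.1 p.2 := by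
    ext l
    simp [palindrome_iff_exists_mirror, and_assoc]
  rw [hset, Set.ncard_coe_finset, card_image_of_injective, card_sigma, trailingSum]
  rintro ⟨j, b⟩ ⟨j', b'⟩ h
  obtain ⟨rfl, rfl⟩ := mirror_injective2 h
  rfl

theorem stmt14_general (k : ℕ) (a : ℕ → ℕ)
    (ha : ∀ m : ℕ, a m = Set.ncard {c : List ℕ |
      (∀ x ∈ c, 0 < x ∧ x ≤ k) ∧ c.sum = 2 * m ∧ c.reverse = c}) :
    (∀ n : ℕ, k < n → a n = ∑ j ∈ Finset.Icc 1 k, a (n - j)) ∧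
    (∀ n : ℕ, n ≤ k / 2 → a n = 2 ^ n) ∧
    (∀ n : ℕ, k / 2 < n → n < k → a n = 2 ^ n - 2 ^ (n - k / 2 - 1)) := by
  simp only [ha, ncard_palindromes]
  set c : ℕ → ℕ := fun t => #(boundedCompositions k t)
  have hc : ∀ t, 0 < t → c t = ∑ i ∈ Icc 1 (min k t), c (t - i) :=
    fun _ => card_boundedCompositions_of_pos
  have hprefix : ∀ n ≤ k, ∑ s ∈ range (n + 1), c s = 2 ^ n :=
    fun _ => sum_range_eq_two_pow (by simp [c, boundedCompositions]) hc
  refine ⟨fun n hn => trailingSum_eq_sum_trailingSum hc (Nat.div_le_self k 2) hn,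
    fun n hn => ?_, fun n hn hnk => ?_⟩
  · simpa [Nat.sub_eq_zero_of_le hn, hprefix n (by omega)] using
      trailingSum_add_sum_range c (k / 2) n
  · have hall := trailingSum_add_sum_range c (k / 2) n
    have hhead := hprefix (n - k / 2 - 1) (by omega)
    rw [show n - k / 2 - 1 + 1 = n - k / 2 by omega] at hhead
    rw [hhead, hprefix n hnk.le] at hall
    omega

/-- The counting sequence of palindromic compositions of `2m` with all parts
at most `k` satisfies the `k`-term recurrence and the stated initial values. -/
theorem stmt14 (k : ℕ) (hk : 1 ≤ k) (a : ℕ → ℕ)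
    (ha : ∀ m : ℕ, a m = Set.ncard {c : List ℕ |
      (∀ x ∈ c, 0 < x ∧ x ≤ k) ∧ c.sum = 2 * m ∧ c.reverse = c}) :
    (∀ n : ℕ, k < n → a n = ∑ j ∈ Finset.Icc 1 k, a (n - j)) ∧
    (∀ n : ℕ, n ≤ k / 2 → a n = 2 ^ n) ∧
    (∀ n : ℕ, k / 2 < n → n < k → a n = 2 ^ n - 2 ^ (n - k / 2 - 1)) :=
  stmt14_general k a ha
end

section
/- Let B(n,k) denote the number of standard domino tableaux of shape (2n−k, k) for 0 ≤ k ≤ n. Then B(n,k) = binomial(n, ⌊k/2⌋). -/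
/-!
Let `g l` be the number of bottom-row cells with label at most `l`. These cells form the shape
`(2l - g l, g l)`, and the domino labelled `l + 1` adds two cells to the top row, two to the
bottom row, or one to each; in the last case it is vertical, so both rows had length `l`.
Conversely every label is read off from this sequence of shapes, so the tableaux of shape
`(2n - k, k)` correspond to the lattice paths `g` with `g 0 = 0`, `g l ≤ l`, `g n = k` and steps
`0`, `+2`, or `+1` from the diagonal. Sorting the paths by their last step gives Pascal's rule
`C(n+1, ⌊k/2⌋) = C(n, ⌊k/2⌋) + C(n, ⌊k/2⌋ - 1)`: the predecessors of `k` are `k` and `k - 2`,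
or `n` and `n - 1` when `k = n + 1`.
-/

/-- Cells of the two-row Young diagram `(2n-k, k)`. -/
def dominoDiagram (n k : ℕ) : Set (ℕ × ℕ) :=
  {c | (c.1 = 0 ∧ c.2 < 2 * n - k) ∨ (c.1 = 1 ∧ c.2 < k)}

/-- Two cells are adjacent (can form a domino). -/
def CellAdjacent (c d : ℕ × ℕ) : Prop :=
  (c.1 = d.1 ∧ (c.2 + 1 = d.2 ∨ d.2 + 1 = c.2)) ∨
  (c.2 = d.2 ∧ (c.1 + 1 = d.1 ∨ d.1 + 1 = c.1))

/-- `T` is a standard domino tableau of shape `(2n-k, k)`: labels `1,…,n`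
weakly increase along rows and columns, and each label occupies exactly one
domino (a pair of adjacent cells). -/
def IsDominoTableau (n k : ℕ) (T : ℕ × ℕ → ℕ) : Prop :=
  (∀ c ∉ dominoDiagram n k, T c = 0) ∧
  (∀ c ∈ dominoDiagram n k, 1 ≤ T c ∧ T c ≤ n) ∧
  (∀ c d : ℕ × ℕ, c ∈ dominoDiagram n k → d ∈ dominoDiagram n k →
    c.1 = d.1 → c.2 ≤ d.2 → T c ≤ T d) ∧
  (∀ c d : ℕ × ℕ, c ∈ dominoDiagram n k → d ∈ dominoDiagram n k →
    c.2 = d.2 → c.1 ≤ d.1 → T c ≤ T d) ∧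
  (∀ l : ℕ, 1 ≤ l → l ≤ n → ∃ c d : ℕ × ℕ, c ∈ dominoDiagram n k ∧
    d ∈ dominoDiagram n k ∧ CellAdjacent c d ∧
    {x ∈ dominoDiagram n k | T x = l} = {c, d})

open Finset

theorem le_iff_lt_card_filter_le {f : ℕ → ℕ} {m j : ℕ} (hf : MonotoneOn f (Set.Iio m))
    (hj : j < m) (l : ℕ) : f j ≤ l ↔ j < #{i ∈ range m | f i ≤ l} := by
  constructor
  · intro hfj
    have hsub : range (j + 1) ⊆ {i ∈ range m | f i ≤ l} := fun i hi => by
      have hij : i ≤ j := Nat.lt_succ_iff.mp (mem_range.mp hi)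
      exact mem_filter.mpr
        ⟨mem_range.mpr (hij.trans_lt hj), (hf (hij.trans_lt hj) hj hij).trans hfj⟩
    simpa using card_le_card hsub
  · intro hlt
    by_contra hfj
    have hsub : {i ∈ range m | f i ≤ l} ⊆ range j := fun i hi => by
      rw [mem_filter, mem_range] at hi
      exact mem_range.mpr (lt_of_not_ge fun hji => hfj ((hf hj hi.1 hji).trans hi.2))
    have := card_le_card hsub
    rw [card_range] at this
    omega

theorem card_filter_le_le_iff {f : ℕ → ℕ} (hf : Monotone f) {n j : ℕ} (hj : j < f n)
    (l : ℕ) : #{i ∈ range n | f i ≤ j} ≤ l ↔ j < f l := by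
  rcases lt_or_ge l n with hl | hl
  · rw [← not_lt, ← le_iff_lt_card_filter_le (hf.monotoneOn _) hl, not_le]
  · exact iff_of_true ((card_filter_le _ _).trans (by simpa using hl)) (hj.trans_le (hf hl))

namespace DominoTableau

/-- The steps of a domino path: a horizontal domino in the top row, a vertical domino
(possible only when both rows have length `l`), or a horizontal domino in the bottom row. -/
def IsStep (l a b : ℕ) : Prop := b = a ∨ (b = a + 1 ∧ a = l) ∨ b = a + 2

instance (l a b : ℕ) : Decidable (IsStep l a b) := inferInstanceAs (Decidable (_ ∨ _ ∨ _))

/-- `g l` is the length of the bottom row of the cells labelled at most `l`. -/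
structure IsDominoPath (n k : ℕ) (g : ℕ → ℕ) : Prop where
  map_zero : g 0 = 0
  le_self : ∀ l, g l ≤ l
  eq_of_le : ∀ l, n ≤ l → g l = k
  isStep : ∀ l, IsStep l (g l) (g (l + 1))

def extendAfter (n k : ℕ) (g : ℕ → ℕ) (l : ℕ) : ℕ := if l ≤ n then g l else k

namespace IsDominoPath

variable {n k j : ℕ} {g : ℕ → ℕ}

theorem monotone (hg : IsDominoPath n k g) : Monotone g :=
  monotone_nat_of_le_succ fun l => by rcases hg.isStep l with h | h | h <;> omega

theorem apply_le (hg : IsDominoPath n k g) (l : ℕ) : g l ≤ k :=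
  hg.eq_of_le (max l n) (le_max_right l n) ▸ hg.monotone (le_max_left l n)

theorem extendAfter_of_isStep (hg : IsDominoPath n j g) (hjk : IsStep n j k) (hk : k ≤ n + 1) :
    IsDominoPath (n + 1) k (extendAfter n k g) where
  map_zero := by simp [extendAfter, hg.map_zero]
  le_self l := by
    have := hg.le_self l
    unfold extendAfter
    split_ifs <;> omega
  eq_of_le l hl := if_neg (by omega)
  isStep l := by
    have hgn := hg.eq_of_le n le_rfl
    rcases lt_trichotomy l n with hl | rfl | hl
    · simpa [extendAfter, hl.le, Nat.succ_le_of_lt hl] using hg.isStep l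
    · simpa [extendAfter, hgn] using hjk
    · simp [extendAfter, IsStep, Nat.not_le_of_lt hl, Nat.not_le_of_lt (Nat.lt_succ_of_lt hl)]

theorem extendAfter_of_succ (hg : IsDominoPath (n + 1) k g) :
    IsDominoPath n (g n) (extendAfter n (g n) g) where
  map_zero := by simp [extendAfter, hg.map_zero]
  le_self l := by
    have := hg.le_self l
    have := hg.le_self n
    unfold extendAfter
    split_ifs <;> omega
  eq_of_le l hl := by
    unfold extendAfter
    split_ifs with h
    · rw [le_antisymm h hl]
    · rfl
  isStep l := by
    unfold extendAfter
    have := hg.isStep l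
    split_ifs <;> first | exact this | (left; congr 1; omega) | (left; rfl)

theorem extendAfter_extendAfter (hg : IsDominoPath (n + 1) k g) :
    extendAfter n k (extendAfter n j g) = g := by
  funext l
  unfold extendAfter
  split_ifs with h
  · rfl
  · exact (hg.eq_of_le l (by omega)).symm

end IsDominoPath

theorem injOn_extendAfter {n k j : ℕ} :
    Set.InjOn (extendAfter n k) {g | IsDominoPath n j g} := by
  intro g hg g' hg' he
  funext l
  rcases le_or_gt l n with hl | hl
  · simpa [extendAfter, hl] using congrFun he l
  · rw [hg.eq_of_le l hl.le, hg'.eq_of_le l hl.le]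

theorem finite_setOf_isDominoPath (n k : ℕ) : {g | IsDominoPath n k g}.Finite := by
  have hinj : Set.InjOn (fun g (i : Fin (n + 1)) => g i) {g | IsDominoPath n k g} := by
    intro g hg g' hg' he
    funext l
    rcases le_or_gt l n with hl | hl
    · exact congrFun he ⟨l, by omega⟩
    · rw [hg.eq_of_le l hl.le, hg'.eq_of_le l hl.le]
  refine Set.Finite.of_finite_image
    ((Set.Finite.pi fun _ => Set.finite_Iic n).subset ?_) hinj
  rintro _ ⟨g, hg, rfl⟩ i -
  exact (hg.le_self i).trans (Nat.lt_succ_iff.mp i.2)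

theorem setOf_isDominoPath_zero : {g | IsDominoPath 0 0 g} = {0} := by
  ext g
  refine ⟨fun hg => funext fun l => hg.eq_of_le l l.zero_le, ?_⟩
  rintro rfl
  exact ⟨rfl, fun l => l.zero_le, fun _ _ => rfl, fun _ => Or.inl rfl⟩

theorem setOf_isDominoPath_succ {n k : ℕ} (hk : k ≤ n + 1) :
    {g | IsDominoPath (n + 1) k g} =
      ⋃ j ∈ (({j ∈ range (n + 1) | IsStep n j k} : Finset ℕ) : Set ℕ),
        extendAfter n k '' {g | IsDominoPath n j g} := by
  ext g
  simp only [Set.mem_ofPred_eq, Set.mem_iUnion, Set.mem_image, coe_filter, mem_range]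
  constructor
  · intro hg
    have hstep := hg.isStep n
    rw [hg.eq_of_le (n + 1) le_rfl] at hstep
    exact ⟨g n, ⟨Nat.lt_succ_of_le (hg.le_self n), hstep⟩, _, hg.extendAfter_of_succ,
      hg.extendAfter_extendAfter⟩
  · rintro ⟨j, ⟨-, hjk⟩, g, hg, rfl⟩
    exact hg.extendAfter_of_isStep hjk hk

theorem ncard_setOf_isDominoPath_succ {n k : ℕ} (hk : k ≤ n + 1) :
    {g | IsDominoPath (n + 1) k g}.ncard =
      ∑ j ∈ range (n + 1) with IsStep n j k, {g | IsDominoPath n j g}.ncard := by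
  rw [setOf_isDominoPath_succ hk, (finite_toSet _).ncard_biUnion
    (fun j _ => (finite_setOf_isDominoPath n j).image _), finsum_mem_coe_finset]
  · exact sum_congr rfl fun j _ => injOn_extendAfter.ncard_image
  · intro j _ j' _ hjj'
    rw [Function.onFun, Set.disjoint_left]
    rintro _ ⟨g, hg, rfl⟩ ⟨g', hg', he⟩
    have := congrFun he n
    simp only [extendAfter, le_rfl, if_true] at this
    exact hjj' (by rw [← hg.eq_of_le n le_rfl, ← hg'.eq_of_le n le_rfl, this])

theorem sum_choose_of_isStep {n k : ℕ} (hk : k ≤ n + 1) :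
    ∑ j ∈ range (n + 1) with IsStep n j k, n.choose (j / 2) = (n + 1).choose (k / 2) := by
  rcases (show k < 2 ∧ k ≤ n ∨ 2 ≤ k ∧ k ≤ n ∨ k = n + 1 by omega) with
    ⟨hk2, hkn⟩ | ⟨hk2, hkn⟩ | rfl
  · have : ({j ∈ range (n + 1) | IsStep n j k} : Finset ℕ) = {k} := by
      ext j; rw [mem_filter, mem_range]; simp only [mem_singleton, IsStep]; omega
    rw [this, sum_singleton, show k / 2 = 0 by omega, Nat.choose_zero_right,
      Nat.choose_zero_right]
  · have : ({j ∈ range (n + 1) | IsStep n j k} : Finset ℕ) = {k - 2, k} := by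
      ext j; rw [mem_filter, mem_range]; simp only [mem_insert, mem_singleton, IsStep]; omega
    obtain ⟨t, ht⟩ : ∃ t, k / 2 = t + 1 := ⟨k / 2 - 1, by omega⟩
    rw [this, sum_pair (by omega), ht, show (k - 2) / 2 = t by omega, Nat.choose_succ_succ']
  · rcases n.even_or_odd' with ⟨s, rfl | rfl⟩
    · rcases s.eq_zero_or_pos with rfl | hs
      · decide
      have : ({j ∈ range (2 * s + 1) | IsStep (2 * s) j (2 * s + 1)} : Finset ℕ) =
          {2 * s - 1, 2 * s} := by
        ext j; rw [mem_filter, mem_range]; simp only [mem_insert, mem_singleton, IsStep]; omega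
      obtain ⟨t, rfl⟩ : ∃ t, s = t + 1 := ⟨s - 1, by omega⟩
      rw [this, sum_pair (by omega), show (2 * (t + 1) - 1) / 2 = t by omega,
        show 2 * (t + 1) / 2 = t + 1 by omega, show (2 * (t + 1) + 1) / 2 = t + 1 by omega,
        Nat.choose_succ_succ' (2 * (t + 1)) t]
    · have : ({j ∈ range (2 * s + 1 + 1) | IsStep (2 * s + 1) j (2 * s + 1 + 1)} : Finset ℕ) =
          {2 * s, 2 * s + 1} := by
        ext j; rw [mem_filter, mem_range]; simp only [mem_insert, mem_singleton, IsStep]; omega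
      rw [this, sum_pair (by omega), show 2 * s / 2 = s by omega,
        show (2 * s + 1) / 2 = s by omega, show (2 * s + 1 + 1) / 2 = s + 1 by omega,
        Nat.choose_succ_succ', Nat.choose_symm_half]

theorem ncard_setOf_isDominoPath : ∀ {n k : ℕ}, k ≤ n →
    {g | IsDominoPath n k g}.ncard = n.choose (k / 2)
  | 0, k, hk => by
    obtain rfl : k = 0 := by omega
    simp [setOf_isDominoPath_zero]
  | n + 1, k, hk => by
    rw [ncard_setOf_isDominoPath_succ hk, ← sum_choose_of_isStep hk]
    refine sum_congr rfl fun j hj => ncard_setOf_isDominoPath ?_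
    rw [mem_filter, mem_range] at hj
    omega

def rowLength (n k : ℕ) : ℕ → ℕ
  | 0 => 2 * n - k
  | 1 => k
  | _ => 0

theorem mem_dominoDiagram {n k i j : ℕ} :
    (i, j) ∈ dominoDiagram n k ↔ j < rowLength n k i := by
  rcases i with _ | _ | i <;> simp [dominoDiagram, rowLength]

def rowFill (n k : ℕ) (T : ℕ × ℕ → ℕ) (i l : ℕ) : ℕ :=
  #{j ∈ range (rowLength n k i) | T (i, j) ≤ l}

/-- `F i l` is the length of row `i` of the shape formed by the cells of `T` labelled at most
`l`. -/
def IsShapeSequence (n k : ℕ) (T : ℕ × ℕ → ℕ) (F : ℕ → ℕ → ℕ) : Prop :=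
  ∀ i j l, (i, j) ∈ dominoDiagram n k → (T (i, j) ≤ l ↔ j < F i l)

def strip (a b : ℕ → ℕ) : Finset (ℕ × ℕ) :=
  {0} ×ˢ Ico (a 0) (b 0) ∪ {1} ×ˢ Ico (a 1) (b 1)

theorem mem_strip {a b : ℕ → ℕ} {i j : ℕ} :
    (i, j) ∈ strip a b ↔
      i = 0 ∧ a 0 ≤ j ∧ j < b 0 ∨ i = 1 ∧ a 1 ≤ j ∧ j < b 1 := by
  simp only [strip, mem_union, mem_product, mem_singleton, mem_Ico]

theorem card_strip (a b : ℕ → ℕ) : #(strip a b) = b 0 - a 0 + (b 1 - a 1) := by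
  rw [strip, card_union_of_disjoint, card_product, card_product]
  · simp
  · rw [disjoint_left]
    rintro ⟨i, j⟩ h0 h1
    simp only [mem_product, mem_singleton] at h0 h1
    omega

theorem widths_of_strip_eq_domino {a b : ℕ → ℕ} {c d : ℕ × ℕ} (hcd : CellAdjacent c d)
    (h : (strip a b : Set (ℕ × ℕ)) = {c, d}) :
    b 0 - a 0 + (b 1 - a 1) = 2 ∧ (b 1 = a 1 + 1 → a 0 = a 1) := by
  have hne : c ≠ d := by
    rintro rfl
    rcases hcd with ⟨_, h | h⟩ | ⟨_, h | h⟩ <;> omega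
  have hcard : #(strip a b) = 2 := by rw [← Set.ncard_coe_finset, h, Set.ncard_pair hne]
  rw [card_strip] at hcard
  refine ⟨hcard, fun h1 => ?_⟩
  rw [strip, show b 0 = a 0 + 1 by omega, h1, Nat.Ico_succ_singleton, Nat.Ico_succ_singleton,
    singleton_product_singleton, singleton_product_singleton, ← insert_eq, coe_pair] at h
  rcases Set.pair_eq_pair_iff.mp h with ⟨rfl, rfl⟩ | ⟨rfl, rfl⟩ <;>
    simp only [CellAdjacent] at hcd <;> omega

namespace IsShapeSequence

variable {n k m : ℕ} {T T' : ℕ × ℕ → ℕ} {F : ℕ → ℕ → ℕ}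

theorem unique (hT : IsShapeSequence n k T F) (hT' : IsShapeSequence n k T' F)
    (h : ∀ x ∉ dominoDiagram n k, T x = 0) (h' : ∀ x ∉ dominoDiagram n k, T' x = 0) :
    T = T' := by
  funext ⟨i, j⟩
  by_cases hx : (i, j) ∈ dominoDiagram n k
  · exact eq_of_forall_ge_iff fun l => (hT i j l hx).trans (hT' i j l hx).symm
  · rw [h _ hx, h' _ hx]

theorem apply_le_apply (hT : IsShapeSequence n k T F) (hF : ∀ l, Antitone (F · l))
    {c d : ℕ × ℕ} (hc : c ∈ dominoDiagram n k) (hd : d ∈ dominoDiagram n k)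
    (h1 : c.1 ≤ d.1) (h2 : c.2 ≤ d.2) : T c ≤ T d := by
  obtain ⟨i, j⟩ := c
  obtain ⟨i', j'⟩ := d
  rw [hT i j _ hc]
  exact h2.trans_lt (((hT i' j' _ hd).mp le_rfl).trans_le (hF _ h1))

theorem rowFill_eq (hT : IsShapeSequence n k T F) {i l : ℕ} (hF : F i l ≤ rowLength n k i) :
    rowFill n k T i l = F i l := by
  rw [rowFill, ← card_range (F i l)]
  congr 1
  ext j
  rw [mem_filter, mem_range, mem_range]
  exact ⟨fun ⟨hj, hTj⟩ => (hT i j l (mem_dominoDiagram.mpr hj)).mp hTj,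
    fun hj => ⟨hj.trans_le hF, (hT i j l (mem_dominoDiagram.mpr (hj.trans_le hF))).mpr hj⟩⟩

theorem setOf_eq_succ (hT : IsShapeSequence n k T F) (hF : ∀ i, F i (m + 1) ≤ rowLength n k i) :
    {x ∈ dominoDiagram n k | T x = m + 1} = ↑(strip (F · m) (F · (m + 1))) := by
  ext ⟨i, j⟩
  have hlabel : (i, j) ∈ dominoDiagram n k →
      (T (i, j) = m + 1 ↔ F i m ≤ j ∧ j < F i (m + 1)) := fun hx => by
    have := hT i j m hx
    have := hT i j (m + 1) hx
    omega
  rw [Set.mem_sep_iff, mem_coe, mem_strip]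
  constructor
  · rintro ⟨hx, hTx⟩
    have hi := mem_dominoDiagram.mp hx
    rcases i with _ | _ | i
    · exact Or.inl ⟨rfl, (hlabel hx).mp hTx⟩
    · exact Or.inr ⟨rfl, (hlabel hx).mp hTx⟩
    · simp [rowLength] at hi
  · rintro (⟨rfl, hj⟩ | ⟨rfl, hj⟩) <;>
    · have hx := mem_dominoDiagram.mpr (hj.2.trans_le (hF _))
      exact ⟨hx, (hlabel hx).mpr hj⟩

theorem exists_domino (hT : IsShapeSequence n k T F)
    (hF : ∀ i, F i (m + 1) ≤ rowLength n k i)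
    (h : ∃ c d, CellAdjacent c d ∧
      (strip (F · m) (F · (m + 1)) : Set (ℕ × ℕ)) = {c, d}) :
    ∃ c d, c ∈ dominoDiagram n k ∧ d ∈ dominoDiagram n k ∧ CellAdjacent c d ∧
      {x ∈ dominoDiagram n k | T x = m + 1} = {c, d} := by
  obtain ⟨c, d, hcd, h⟩ := h
  rw [← hT.setOf_eq_succ hF] at h
  have hc : c ∈ {x ∈ dominoDiagram n k | T x = m + 1} := h ▸ Set.mem_insert c {d}
  have hd : d ∈ {x ∈ dominoDiagram n k | T x = m + 1} := h ▸ Set.mem_insert_of_mem c rfl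
  exact ⟨c, d, hc.1, hd.1, hcd, h⟩

end IsShapeSequence

def toPath (n k : ℕ) (T : ℕ × ℕ → ℕ) : ℕ → ℕ := rowFill n k T 1

/-- The shape sequence of the tableau of `g`: of the `2 l` cells labelled at most `l`, `g l` lie
in row `1` and the rest in row `0`, with time frozen at `n`. -/
def pathFill (n : ℕ) (g : ℕ → ℕ) : ℕ → ℕ → ℕ
  | 0, l => 2 * min l n - g l
  | 1, l => g l
  | _, _ => 0

/-- A cell gets the first time at which its row has grown past it. -/
def ofPath (n k : ℕ) (g : ℕ → ℕ) (x : ℕ × ℕ) : ℕ :=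
  if x.2 < rowLength n k x.1 then #{l ∈ range n | pathFill n g x.1 l ≤ x.2} else 0

theorem ofPath_eq_zero {n k : ℕ} {g : ℕ → ℕ} :
    ∀ x ∉ dominoDiagram n k, ofPath n k g x = 0 :=
  fun ⟨_, _⟩ hx => if_neg (mt mem_dominoDiagram.mpr hx)

theorem rowFill_le_rowLength {n k : ℕ} (T : ℕ × ℕ → ℕ) (i l : ℕ) :
    rowFill n k T i l ≤ rowLength n k i :=
  (card_filter_le _ _).trans (card_range _).le

theorem rowFill_mono (n k : ℕ) (T : ℕ × ℕ → ℕ) (i : ℕ) : Monotone (rowFill n k T i) :=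
  fun _ _ hll' => card_le_card (monotone_filter_right _ fun _ _ h => h.trans hll')

end DominoTableau

open DominoTableau

namespace IsDominoTableau

variable {n k : ℕ} {T : ℕ × ℕ → ℕ}

theorem isShapeSequence_rowFill (hT : IsDominoTableau n k T) :
    IsShapeSequence n k T (rowFill n k T) := fun i _ l hx =>
  le_iff_lt_card_filter_le (fun a ha b hb hab => hT.2.2.1 (i, a) (i, b)
    (mem_dominoDiagram.mpr ha) (mem_dominoDiagram.mpr hb) rfl hab) (mem_dominoDiagram.mp hx) l

theorem rowFill_zero (hT : IsDominoTableau n k T) (i : ℕ) : rowFill n k T i 0 = 0 := by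
  rw [rowFill, card_eq_zero, filter_eq_empty_iff]
  intro j hj
  have := (hT.2.1 (i, j) (mem_dominoDiagram.mpr (mem_range.mp hj))).1
  omega

theorem rowFill_of_le (hT : IsDominoTableau n k T) {l : ℕ} (hl : n ≤ l) (i : ℕ) :
    rowFill n k T i l = rowLength n k i := by
  rw [rowFill, filter_true_of_mem, card_range]
  exact fun j hj => (hT.2.1 _ (mem_dominoDiagram.mpr (mem_range.mp hj))).2.trans hl

theorem rowFill_step (hT : IsDominoTableau n k T) {m : ℕ} (hm : m < n) :
    rowFill n k T 0 (m + 1) - rowFill n k T 0 m +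
        (rowFill n k T 1 (m + 1) - rowFill n k T 1 m) = 2 ∧
      (rowFill n k T 1 (m + 1) = rowFill n k T 1 m + 1 →
        rowFill n k T 0 m = rowFill n k T 1 m) := by
  obtain ⟨c, d, -, -, hcd, h⟩ := hT.2.2.2.2 (m + 1) (by omega) hm
  rw [hT.isShapeSequence_rowFill.setOf_eq_succ fun i => rowFill_le_rowLength T i _] at h
  exact widths_of_strip_eq_domino hcd h

theorem rowFill_add (hT : IsDominoTableau n k T) :
    ∀ l ≤ n, rowFill n k T 0 l + rowFill n k T 1 l = 2 * l
  | 0, _ => by rw [hT.rowFill_zero, hT.rowFill_zero]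
  | m + 1, hm => by
    have := hT.rowFill_add m (by omega)
    have := (hT.rowFill_step hm).1
    have := rowFill_mono n k T 0 (Nat.le_add_right m 1)
    have := rowFill_mono n k T 1 (Nat.le_add_right m 1)
    omega

theorem rowFill_one_le_rowFill_zero (hT : IsDominoTableau n k T) (hk : k ≤ n) (l : ℕ) :
    rowFill n k T 1 l ≤ rowFill n k T 0 l := by
  refine le_of_forall_lt fun j hj => ?_
  have hj1 : (1, j) ∈ dominoDiagram n k :=
    mem_dominoDiagram.mpr (hj.trans_le (rowFill_le_rowLength T 1 l))
  have hj0 : (0, j) ∈ dominoDiagram n k := by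
    have := mem_dominoDiagram.mp hj1
    exact mem_dominoDiagram.mpr (by simp only [rowLength] at this ⊢; omega)
  rw [← hT.isShapeSequence_rowFill 0 j l hj0]
  exact (hT.2.2.2.1 _ _ hj0 hj1 rfl zero_le_one).trans
    ((hT.isShapeSequence_rowFill 1 j l hj1).mpr hj)

theorem isDominoPath_toPath (hT : IsDominoTableau n k T) (hk : k ≤ n) :
    IsDominoPath n k (toPath n k T) where
  map_zero := hT.rowFill_zero 1
  le_self l := by
    rcases le_or_gt l n with hl | hl
    · have := hT.rowFill_add l hl
      have := hT.rowFill_one_le_rowFill_zero hk l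
      simp only [toPath]
      omega
    · rw [toPath, hT.rowFill_of_le hl.le]
      exact hk.trans hl.le
  eq_of_le l hl := hT.rowFill_of_le hl 1
  isStep l := by
    simp only [toPath, IsStep]
    rcases lt_or_ge l n with hl | hl
    · have := hT.rowFill_step hl
      have := hT.rowFill_add l hl.le
      have := rowFill_mono n k T 1 (Nat.le_add_right l 1)
      omega
    · rw [hT.rowFill_of_le hl, hT.rowFill_of_le (hl.trans l.le_succ)]
      exact Or.inl rfl

theorem rowFill_eq_pathFill (hT : IsDominoTableau n k T) :
    rowFill n k T = pathFill n (toPath n k T) := by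
  funext i l
  rcases i with _ | _ | i
  · rcases le_total l n with hl | hl
    · have := hT.rowFill_add l hl
      simp only [pathFill, toPath, min_eq_left hl]
      omega
    · simp [pathFill, toPath, min_eq_right hl, hT.rowFill_of_le hl, rowLength]
  · rfl
  · simp [rowFill, rowLength, pathFill]

end IsDominoTableau

namespace DominoTableau.IsDominoPath

variable {n k : ℕ} {g : ℕ → ℕ}

theorem pathFill_monotone (hg : IsDominoPath n k g) (i : ℕ) : Monotone (pathFill n g i) := by
  rcases i with _ | _ | i
  · refine monotone_nat_of_le_succ fun l => ?_
    have := hg.isStep l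
    have := hg.le_self l
    have := hg.le_self (l + 1)
    rcases lt_or_ge l n with hl | hl
    · simp only [pathFill, IsStep] at *
      omega
    · simp [pathFill, hg.eq_of_le l hl, hg.eq_of_le (l + 1) (hl.trans l.le_succ), hl,
        hl.trans l.le_succ]
  · exact hg.monotone
  · exact monotone_const

theorem pathFill_of_le (hg : IsDominoPath n k g) {l : ℕ} (hl : n ≤ l) (i : ℕ) :
    pathFill n g i l = rowLength n k i := by
  rcases i with _ | _ | i <;> simp [pathFill, rowLength, hg.eq_of_le l hl, hl]

theorem pathFill_le (hg : IsDominoPath n k g) (i l : ℕ) : pathFill n g i l ≤ rowLength n k i :=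
  hg.pathFill_of_le (le_max_right l n) i ▸ hg.pathFill_monotone i (le_max_left l n)

theorem pathFill_antitone (hg : IsDominoPath n k g) (hk : k ≤ n) (l : ℕ) :
    Antitone (pathFill n g · l) := by
  refine antitone_nat_of_succ_le fun i => ?_
  rcases i with _ | _ | i
  · have := hg.le_self l
    have := hg.apply_le l
    simp only [pathFill]
    omega
  · exact Nat.zero_le _
  · exact le_rfl

theorem isShapeSequence_ofPath (hg : IsDominoPath n k g) :
    IsShapeSequence n k (ofPath n k g) (pathFill n g) := fun i j l hx => by
  have hj := mem_dominoDiagram.mp hx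
  rw [ofPath, if_pos hj]
  exact card_filter_le_le_iff (hg.pathFill_monotone i)
    (hj.trans_eq (hg.pathFill_of_le le_rfl i).symm) l

theorem exists_strip_eq_domino (hg : IsDominoPath n k g) {m : ℕ} (hm : m < n) :
    ∃ c d, CellAdjacent c d ∧
      (strip (pathFill n g · m) (pathFill n g · (m + 1)) : Set (ℕ × ℕ)) = {c, d} := by
  have h0 : pathFill n g 0 m = 2 * m - g m := by simp [pathFill, hm.le]
  have h0' : pathFill n g 0 (m + 1) = 2 * (m + 1) - g (m + 1) := by simp [pathFill, hm]
  have h1 : ∀ l, pathFill n g 1 l = g l := fun _ => rfl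
  have := hg.le_self m
  have := hg.le_self (m + 1)
  have hstrip : ∀ c d : ℕ × ℕ, (∀ i j, (i, j) ∈ strip (pathFill n g · m)
      (pathFill n g · (m + 1)) ↔ (i, j) = c ∨ (i, j) = d) →
      (strip (pathFill n g · m) (pathFill n g · (m + 1)) : Set (ℕ × ℕ)) = {c, d} :=
    fun c d h => by
      ext ⟨i, j⟩
      simpa using h i j
  rcases hg.isStep m with h | ⟨h, hdiag⟩ | h
  · exact ⟨(0, 2 * m - g m), (0, 2 * m - g m + 1), by simp [CellAdjacent],
      hstrip _ _ fun i j => by simp only [mem_strip, h0, h0', h1, Prod.mk.injEq]; omega⟩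
  · exact ⟨(0, m), (1, m), by simp [CellAdjacent],
      hstrip _ _ fun i j => by simp only [mem_strip, h0, h0', h1, Prod.mk.injEq]; omega⟩
  · exact ⟨(1, g m), (1, g m + 1), by simp [CellAdjacent],
      hstrip _ _ fun i j => by simp only [mem_strip, h0, h0', h1, Prod.mk.injEq]; omega⟩

theorem isDominoTableau_ofPath (hg : IsDominoPath n k g) (hk : k ≤ n) :
    IsDominoTableau n k (ofPath n k g) := by
  have hS := hg.isShapeSequence_ofPath
  have hanti := hg.pathFill_antitone hk
  refine ⟨ofPath_eq_zero, fun ⟨i, j⟩ hx => ⟨?_, ?_⟩,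
    fun c d hc hd h1 h2 => hS.apply_le_apply hanti hc hd h1.le h2,
    fun c d hc hd h2 h1 => hS.apply_le_apply hanti hc hd h1 h2.le, fun l hl hln => ?_⟩
  · by_contra h0
    have := (hS i j 0 hx).mp (by omega)
    rcases i with _ | _ | i <;> simp [pathFill, hg.map_zero] at this
  · exact (hS i j n hx).mpr (hg.pathFill_of_le le_rfl i ▸ mem_dominoDiagram.mp hx)
  · obtain ⟨m, rfl⟩ : ∃ m, l = m + 1 := ⟨l - 1, by omega⟩
    exact hS.exists_domino (fun i => hg.pathFill_le i _) (hg.exists_strip_eq_domino hln)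

theorem toPath_ofPath (hg : IsDominoPath n k g) : toPath n k (ofPath n k g) = g :=
  funext fun l => hg.isShapeSequence_ofPath.rowFill_eq (hg.pathFill_le 1 l)

end DominoTableau.IsDominoPath

theorem IsDominoTableau.ofPath_toPath {n k : ℕ} {T : ℕ × ℕ → ℕ}
    (hT : IsDominoTableau n k T) (hk : k ≤ n) : ofPath n k (toPath n k T) = T :=
  (hT.isDominoPath_toPath hk).isShapeSequence_ofPath.unique
    (hT.rowFill_eq_pathFill ▸ hT.isShapeSequence_rowFill) ofPath_eq_zero hT.1

theorem DominoTableau.bijOn_toPath {n k : ℕ} (hk : k ≤ n) :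
    Set.BijOn (toPath n k) {T | IsDominoTableau n k T} {g | IsDominoPath n k g} :=
  ⟨fun _ hT => hT.isDominoPath_toPath hk,
    fun T hT T' hT' h => by rw [← hT.ofPath_toPath hk, h, hT'.ofPath_toPath hk],
    fun g hg => ⟨ofPath n k g, hg.isDominoTableau_ofPath hk, hg.toPath_ofPath⟩⟩

/-- The number of standard domino tableaux of shape `(2n-k, k)` is
`n.choose ⌊k/2⌋`. -/
theorem stmt16 (n k : ℕ) (hk : k ≤ n) :
    Set.ncard {T : ℕ × ℕ → ℕ | IsDominoTableau n k T} = n.choose (k / 2) := by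
  rw [(bijOn_toPath hk).ncard_eq, ncard_setOf_isDominoPath hk]
end
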